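/- arXiv:1412.5297 — 7 statements merged into one kernel-verified Lean document; each statement's English description precedes it below -/
import Mathlib

section
/- If H and K are unbiased Bush-type Hadamard matrices of order 4n² with H·Kᵀ = 2n·L for a ±1 matrix L, then L is also a Bush-type Hadamard matrix of order 4n². -/
open Matrix BigOperators

/-- A matrix has all entries ±1. -/
def signMatrix {α : Type*} (H : Matrix α α ℝ) : Prop :=
  ∀ p q, H p q = 1 ∨ H p q = -1

/-- Bush-type condition: diagonal `2n`-blocks are all-ones, off-diagonal blocks
have zero row and column sums. -/
def isBushType (n : ℕ)
    (H : Matrix (Fin (2*n) × Fin (2*n)) (Fin (2*n) × Fin (2*n)) ℝ) : Prop :=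
  (∀ i a b, H (i, a) (i, b) = 1) ∧
  (∀ i j, i ≠ j →
    (∀ a, ∑ b, H (i, a) (j, b) = 0) ∧ (∀ b, ∑ a, H (i, a) (j, b) = 0))

/-
Write `B = I ⊗ J` for the block-diagonal matrix of all-ones blocks. For a ±1 matrix, being of
Bush type says exactly `H B = B H = 2n B`. Since `B` is symmetric,
`2n · L B = H Kᵀ B = H (B K)ᵀ = 2n · H B = (2n)² B`, and symmetrically `2n · B L = (2n)² B`,
so `L` is of Bush type; and `(2n)² · L Lᵀ = H (Kᵀ K) Hᵀ = 4n² · H Hᵀ = (4n²)² I`.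
-/

open Kronecker

def blockOnes (ι κ R : Type*) [DecidableEq ι] [NonAssocSemiring R] :
    Matrix (ι × κ) (ι × κ) R :=
  (1 : Matrix ι ι R) ⊗ₖ of fun _ _ => 1

section BlockOnes

variable {m ι κ R : Type*} [Fintype ι] [Fintype κ] [DecidableEq ι] [NonAssocSemiring R]

theorem mul_blockOnes_apply (M : Matrix m (ι × κ) R) (p : m) (j : ι) (b : κ) :
    (M * blockOnes ι κ R) p (j, b) = ∑ c, M p (j, c) := by
  rw [mul_apply, Fintype.sum_prod_type,
    Fintype.sum_eq_single j fun x hx => by simp [blockOnes, hx]]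
  simp [blockOnes]

theorem blockOnes_mul_apply (M : Matrix (ι × κ) m R) (i : ι) (a : κ) (q : m) :
    (blockOnes ι κ R * M) (i, a) q = ∑ c, M (i, c) q := by
  rw [mul_apply, Fintype.sum_prod_type,
    Fintype.sum_eq_single i fun x hx => by simp [blockOnes, Ne.symm hx]]
  simp [blockOnes]

end BlockOnes

theorem isSymm_blockOnes (ι κ R : Type*) [DecidableEq ι] [NonAssocSemiring R] :
    (blockOnes ι κ R).IsSymm := by
  rw [IsSymm, blockOnes, ← kroneckerMap_transpose, transpose_one]
  rfl

theorem blockOnes_apply_of_ne {ι κ R : Type*} [DecidableEq ι] [NonAssocSemiring R] {i j : ι}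
    (hij : i ≠ j) (a b : κ) : blockOnes ι κ R (i, a) (j, b) = 0 := by
  simp [blockOnes, hij]

section Unbiased

variable {N R : Type*} [Fintype N]

theorem transpose_mul_self_eq_smul_one [DecidableEq N] [Field R] {K : Matrix N N R} {c : R}
    (hc : c ≠ 0) (hK : K * Kᵀ = c • 1) : Kᵀ * K = c • 1 := by
  have hinv : K * (c⁻¹ • Kᵀ) = 1 := by
    rw [Matrix.mul_smul, hK, smul_smul, inv_mul_cancel₀ hc, one_smul]
  calc Kᵀ * K = c • ((c⁻¹ • Kᵀ) * K) := by
        rw [Matrix.smul_mul, smul_smul, mul_inv_cancel₀ hc, one_smul]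
    _ = c • 1 := by rw [mul_eq_one_comm.mp hinv]

theorem mul_transpose_self_eq_smul_one_of_unbiased [DecidableEq N] [Field R] {H K L : Matrix N N R} {s : R}
    (hs : s ≠ 0) (hH : H * Hᵀ = (s * s) • 1) (hK : K * Kᵀ = (s * s) • 1)
    (hU : H * Kᵀ = s • L) : L * Lᵀ = (s * s) • 1 := by
  have hss : s * s ≠ 0 := mul_ne_zero hs hs
  refine smul_right_injective _ hss ?_
  calc (s * s) • (L * Lᵀ) = (H * Kᵀ) * (H * Kᵀ)ᵀ := by
        rw [hU, transpose_smul, Matrix.smul_mul, Matrix.mul_smul, smul_smul]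
    _ = H * (Kᵀ * K) * Hᵀ := by simp only [transpose_mul, transpose_transpose, Matrix.mul_assoc]
    _ = (s * s) • ((s * s) • 1) := by
        rw [transpose_mul_self_eq_smul_one hss hK, Matrix.mul_smul, Matrix.mul_one,
          Matrix.smul_mul, hH]

variable [CommRing R] [NoZeroDivisors R] {B H K L : Matrix N N R} {s : R}

theorem mul_right_eq_smul_of_unbiased (hs : s ≠ 0) (hB : B.IsSymm) (hHB : H * B = s • B)
    (hBK : B * K = s • B) (hU : H * Kᵀ = s • L) : L * B = s • B := by
  refine smul_right_injective _ hs ?_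
  calc s • (L * B) = H * (B * K)ᵀ := by
        rw [transpose_mul, hB.eq, ← Matrix.mul_assoc, hU, Matrix.smul_mul]
    _ = s • (s • B) := by rw [hBK, transpose_smul, hB.eq, Matrix.mul_smul, hHB]

theorem mul_left_eq_smul_of_unbiased (hs : s ≠ 0) (hB : B.IsSymm) (hBH : B * H = s • B)
    (hKB : K * B = s • B) (hU : H * Kᵀ = s • L) : B * L = s • B := by
  refine smul_right_injective _ hs ?_
  calc s • (B * L) = s • (K * B)ᵀ := by
        rw [transpose_mul, hB.eq, ← Matrix.mul_smul, ← hU, ← Matrix.mul_assoc, hBH,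
          Matrix.smul_mul]
    _ = s • (s • B) := by rw [hKB, transpose_smul, hB.eq]

end Unbiased

section Bush

variable {n : ℕ} {H : Matrix (Fin (2*n) × Fin (2*n)) (Fin (2*n) × Fin (2*n)) ℝ}

local notation "B" => blockOnes (Fin (2*n)) (Fin (2*n)) ℝ

theorem isBushType.mul_blockOnes (hH : isBushType n H) : H * B = (2 * n : ℝ) • B := by
  ext ⟨i, a⟩ ⟨j, b⟩
  rw [mul_blockOnes_apply, Matrix.smul_apply]
  by_cases hij : i = j
  · subst hij
    simp [hH.1, blockOnes]
  · rw [(hH.2 i j hij).1 a, blockOnes_apply_of_ne hij, smul_zero]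

theorem isBushType.blockOnes_mul (hH : isBushType n H) : B * H = (2 * n : ℝ) • B := by
  ext ⟨i, a⟩ ⟨j, b⟩
  rw [blockOnes_mul_apply, Matrix.smul_apply]
  by_cases hij : i = j
  · subst hij
    simp [hH.1, blockOnes]
  · rw [(hH.2 i j hij).2 b, blockOnes_apply_of_ne hij, smul_zero]

theorem isBushType_of_mul_blockOnes (hH : signMatrix H) (hHB : H * B = (2 * n : ℝ) • B)
    (hBH : B * H = (2 * n : ℝ) • B) : isBushType n H := by
  have hrow : ∀ i j a b, ∑ c, H (i, a) (j, c) = (2 * n : ℝ) * B (i, a) (j, b) :=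
      fun i j a b => by
    rw [← mul_blockOnes_apply, hHB, Matrix.smul_apply, smul_eq_mul]
  have hcol : ∀ i j a b, ∑ c, H (i, c) (j, b) = (2 * n : ℝ) * B (i, a) (j, b) :=
      fun i j a b => by
    rw [← blockOnes_mul_apply, hBH, Matrix.smul_apply, smul_eq_mul]
  refine ⟨fun i a => ?_, fun i j hij => ⟨fun a => ?_, fun b => ?_⟩⟩
  · -- a row of ±1 entries summing to its length consists of ones
    have hsum : ∑ c, H (i, a) (i, c) = ∑ _ : Fin (2 * n), (1 : ℝ) := by
      simp [hrow i i a a, blockOnes]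
    have hle : ∀ c ∈ Finset.univ, H (i, a) (i, c) ≤ 1 := fun c _ => by
      rcases hH (i, a) (i, c) with h | h <;> norm_num [h]
    exact fun c => (Finset.sum_eq_sum_iff_of_le hle).1 hsum c (Finset.mem_univ c)
  · rw [hrow i j a a, blockOnes_apply_of_ne hij, mul_zero]
  · rw [hcol i j b b, blockOnes_apply_of_ne hij, mul_zero]

end Bush

theorem unbiased_bush_product_is_bush_general (n : ℕ) (hn : 0 < n)
    (H K L : Matrix (Fin (2*n) × Fin (2*n)) (Fin (2*n) × Fin (2*n)) ℝ)
    (hLsign : signMatrix L)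
    (hHHad : H * Hᵀ = ((4 * n ^ 2 : ℕ) : ℝ) • 1)
    (hKHad : K * Kᵀ = ((4 * n ^ 2 : ℕ) : ℝ) • 1)
    (hHBush : isBushType n H) (hKBush : isBushType n K)
    (hU : H * Kᵀ = (2 * (n : ℝ)) • L) :
    L * Lᵀ = ((4 * n ^ 2 : ℕ) : ℝ) • 1 ∧ isBushType n L := by
  have hs : (2 * n : ℝ) ≠ 0 := by positivity
  have hsq : ((4 * n ^ 2 : ℕ) : ℝ) = 2 * n * (2 * n) := by push_cast; ring
  have hB := isSymm_blockOnes (Fin (2*n)) (Fin (2*n)) ℝ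
  rw [hsq] at hHHad hKHad ⊢
  exact ⟨mul_transpose_self_eq_smul_one_of_unbiased hs hHHad hKHad hU,
    isBushType_of_mul_blockOnes hLsign
      (mul_right_eq_smul_of_unbiased hs hB hHBush.mul_blockOnes hKBush.blockOnes_mul hU)
      (mul_left_eq_smul_of_unbiased hs hB hHBush.blockOnes_mul hKBush.mul_blockOnes hU)⟩

/-- If `H` and `K` are unbiased Bush-type Hadamard matrices of order `4n²` with
`H·Kᵀ = 2n·L` for a ±1 matrix `L`, then `L` is also a Bush-type Hadamard matrix. -/
theorem unbiased_bush_product_is_bush (n : ℕ) (hn : 0 < n)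
    (H K L : Matrix (Fin (2*n) × Fin (2*n)) (Fin (2*n) × Fin (2*n)) ℝ)
    (hHsign : signMatrix H) (hKsign : signMatrix K) (hLsign : signMatrix L)
    (hHHad : H * Hᵀ = ((4 * n ^ 2 : ℕ) : ℝ) • 1)
    (hKHad : K * Kᵀ = ((4 * n ^ 2 : ℕ) : ℝ) • 1)
    (hHBush : isBushType n H) (hKBush : isBushType n K)
    (hU : H * Kᵀ = (2 * (n : ℝ)) • L) :
    L * Lᵀ = ((4 * n ^ 2 : ℕ) : ℝ) • 1 ∧ isBushType n L :=
  unbiased_bush_product_is_bush_general n hn H K L hLsign hHHad hKHad hHBush hKBush hU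
end

section
/- Let H₁,…,H_m be mutually unbiased regular Hadamard matrices of order 4n² (each with constant row/column sum 2n). Let M be the Gram matrix of the (m+1) block rows [I, H₁/2n, …, H_m/2n], i.e., M is the (m+1)(4n²)×(m+1)(4n²) matrix with (i,j)-block equal to G_i·G_jᵀ where G₀ = I and G_k = H_k/(2n). Then M² = (m+1)·M. -/
open Matrix BigOperators

/-!
Stack the blocks `G₀, …, G_m` into one tall matrix `B`, so that `M = B Bᵀ`. Each `G_k` is
orthogonal (`G₀ = I`, and `H_k / 2n` because `H_k H_kᵀ = (2n)² I`), hence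
`Bᵀ B = ∑ₖ G_kᵀ G_k = (m + 1) I` and `M² = B (Bᵀ B) Bᵀ = (m + 1) M`.
-/

namespace Matrix

variable {ι m n R : Type*}

theorem mul_transpose_mul_mul_transpose_of_transpose_mul_eq_smul_one
    [Fintype m] [Fintype n] [CommSemiring R] [DecidableEq n] (B : Matrix m n R) (c : R)
    (h : Bᵀ * B = c • 1) :
    B * Bᵀ * (B * Bᵀ) = c • (B * Bᵀ) := by
  rw [Matrix.mul_assoc, ← Matrix.mul_assoc Bᵀ, h, smul_mul, Matrix.one_mul, Matrix.mul_smul]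

def blockCol (G : ι → Matrix m n R) : Matrix (ι × m) n R :=
  of fun ip q => G ip.1 ip.2 q

theorem blockCol_mul_transpose_apply [Fintype n] [NonUnitalNonAssocSemiring R]
    (G : ι → Matrix m n R) (i j : ι) (p q : m) :
    (blockCol G * (blockCol G)ᵀ) (i, p) (j, q) = (G i * (G j)ᵀ) p q :=
  rfl

theorem transpose_blockCol_mul_blockCol [Fintype ι] [Fintype m] [NonUnitalNonAssocSemiring R]
    (G : ι → Matrix m n R) :
    (blockCol G)ᵀ * blockCol G = ∑ k, (G k)ᵀ * G k := by
  ext p q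
  simp only [mul_apply, sum_apply, Fintype.sum_prod_type, transpose_apply, blockCol, of_apply]

theorem mul_transpose_smul_inv_eq_one [Fintype n] [Field R] [DecidableEq n] (H : Matrix n n R)
    {c : R} (hc : c ≠ 0) (hH : H * Hᵀ = c ^ 2 • 1) :
    (c⁻¹ • H) * (c⁻¹ • H)ᵀ = 1 := by
  rw [transpose_smul, smul_mul, Matrix.mul_smul, hH, smul_smul, smul_smul]
  have hc2 : c⁻¹ * c⁻¹ * c ^ 2 = 1 := by field_simp
  rw [hc2, one_smul]

end Matrix

theorem gram_of_MURH_sq_general (n m : ℕ) (hn : 0 < n)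
    (H : Fin m → Matrix (Fin (4*n^2)) (Fin (4*n^2)) ℝ)
    (hHad : ∀ k, H k * (H k)ᵀ = ((4 * n ^ 2 : ℕ) : ℝ) • 1)
    (G : Fin (m+1) → Matrix (Fin (4*n^2)) (Fin (4*n^2)) ℝ)
    (hG0 : G 0 = 1)
    (hGs : ∀ k : Fin m, G k.succ = (2 * (n : ℝ))⁻¹ • H k)
    (M : Matrix (Fin (m+1) × Fin (4*n^2)) (Fin (m+1) × Fin (4*n^2)) ℝ)
    (hM : ∀ i j p q, M (i, p) (j, q) = (G i * (G j)ᵀ) p q) :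
    M * M = ((m : ℝ) + 1) • M := by
  have hG_orth : ∀ k, (G k)ᵀ * G k = 1 := by
    refine fun k => mul_eq_one_comm.mp ?_
    induction k using Fin.cases with
    | zero => simp [hG0]
    | succ k =>
      rw [hGs]
      refine mul_transpose_smul_inv_eq_one _ (by positivity) ?_
      rw [hHad]
      push_cast
      ring_nf
  have hM_gram : M = blockCol G * (blockCol G)ᵀ := by
    ext ⟨i, p⟩ ⟨j, q⟩
    rw [blockCol_mul_transpose_apply, hM]
  have hB : (blockCol G)ᵀ * blockCol G = ((m : ℝ) + 1) • 1 := by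
    rw [transpose_blockCol_mul_blockCol, Fintype.sum_congr _ _ hG_orth, Finset.sum_const,
      Finset.card_univ, Fintype.card_fin, ← Nat.cast_smul_eq_nsmul ℝ]
    push_cast
    rfl
  rw [hM_gram]
  exact mul_transpose_mul_mul_transpose_of_transpose_mul_eq_smul_one _ _ hB

/-- For mutually unbiased regular Hadamard matrices `H₁, …, H_m` of order `4n²`,
the Gram matrix `M` of `[I, H₁/2n, …, H_m/2n]` satisfies `M² = (m+1)·M`. -/
theorem gram_of_MURH_sq (n m : ℕ) (hn : 0 < n)
    (H : Fin m → Matrix (Fin (4*n^2)) (Fin (4*n^2)) ℝ)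
    (hsign : ∀ k, signMatrix (H k))
    (hHad : ∀ k, H k * (H k)ᵀ = ((4 * n ^ 2 : ℕ) : ℝ) • 1)
    (hrow : ∀ k p, ∑ q, H k p q = 2 * (n : ℝ))
    (hcol : ∀ k q, ∑ p, H k p q = 2 * (n : ℝ))
    (hmub : ∀ k l, k ≠ l → ∃ L, signMatrix L ∧ H k * (H l)ᵀ = (2 * (n : ℝ)) • L)
    (G : Fin (m+1) → Matrix (Fin (4*n^2)) (Fin (4*n^2)) ℝ)
    (hG0 : G 0 = 1)
    (hGs : ∀ k : Fin m, G k.succ = (2 * (n : ℝ))⁻¹ • H k)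
    (M : Matrix (Fin (m+1) × Fin (4*n^2)) (Fin (m+1) × Fin (4*n^2)) ℝ)
    (hM : ∀ i j p q, M (i, p) (j, q) = (G i * (G j)ᵀ) p q) :
    M * M = ((m : ℝ) + 1) • M :=
  gram_of_MURH_sq_general n m hn H hHad G hG0 hGs M hM
end

section
/- With M the Gram matrix as above built from m ≥ 2 mutually unbiased regular Hadamard matrices of order 4n², the matrix B = 2n(M − I) has all entries in {−1, 0, 1}, and writing B = B₁ − B₂ with B₁, B₂ disjoint (0,1)-matrices, one has B₁ + B₂ = (J_{m+1} − I_{m+1}) ⊗ J_{4n²}. -/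
open Matrix BigOperators

/-!
Every block of the Gram matrix `M` is `G i Gⱼᵀ`. The diagonal blocks are `I`, since each `H/(2n)`
is orthogonal, so `2n(M − I)` vanishes there; the off-diagonal blocks are `(2n)⁻¹` times a ±1
matrix (`Hᵀ/(2n)`, `H/(2n)`, or the unbiasedness of `Hₖ, Hₗ`), so `2n(M − I)` is ±1 there.
For disjoint (0,1)-matrices `B₁ + B₂ = |B₁ − B₂|` entrywise, which is the claimed support matrix.
-/

theorem signMatrix.transpose {α : Type*} {H : Matrix α α ℝ} (hH : signMatrix H) :
    signMatrix Hᵀ :=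
  fun p q => hH q p

theorem add_eq_abs_sub_of_zero_one {x y : ℝ} (hx : x = 0 ∨ x = 1) (hy : y = 0 ∨ y = 1)
    (hxy : x = 0 ∨ y = 0) : x + y = |x - y| := by
  rcases hx with rfl | rfl <;> rcases hy with rfl | rfl <;> simp_all

section Gram

variable {κ : Type*} [Fintype κ] [DecidableEq κ]

theorem smul_inv_mul_transpose_smul_inv {K : Type*} [Field K] {c : K} (hc : c ≠ 0)
    {H : Matrix κ κ K} (hH : H * Hᵀ = c ^ 2 • 1) : (c⁻¹ • H) * (c⁻¹ • H)ᵀ = 1 := by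
  rw [transpose_smul, smul_mul, Matrix.mul_smul, hH, smul_smul, smul_smul,
    show c⁻¹ * c⁻¹ * c ^ 2 = 1 by field_simp, one_smul]

variable {m : ℕ} {c : ℝ} {H : Fin m → Matrix κ κ ℝ} {G : Fin (m + 1) → Matrix κ κ ℝ}

theorem gram_self (hc : c ≠ 0) (hHad : ∀ k, H k * (H k)ᵀ = c ^ 2 • 1) (hG0 : G 0 = 1)
    (hGs : ∀ k, G k.succ = c⁻¹ • H k) (i : Fin (m + 1)) : G i * (G i)ᵀ = 1 := by
  cases i using Fin.cases with
  | zero => rw [hG0, transpose_one, one_mul]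
  | succ k => rw [hGs, smul_inv_mul_transpose_smul_inv hc (hHad k)]

theorem exists_signMatrix_gram_of_ne (hc : c ≠ 0)
    (hsign : ∀ k, signMatrix (H k))
    (hmub : ∀ k l, k ≠ l → ∃ L, signMatrix L ∧ H k * (H l)ᵀ = c • L) (hG0 : G 0 = 1)
    (hGs : ∀ k, G k.succ = c⁻¹ • H k) {i j : Fin (m + 1)} (hij : i ≠ j) :
    ∃ L, signMatrix L ∧ G i * (G j)ᵀ = c⁻¹ • L := by
  cases i using Fin.cases with
  | zero =>
    cases j using Fin.cases with
    | zero => exact absurd rfl hij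
    | succ l => exact ⟨(H l)ᵀ, (hsign l).transpose, by rw [hG0, hGs, transpose_smul, one_mul]⟩
  | succ k =>
    cases j using Fin.cases with
    | zero => exact ⟨H k, hsign k, by rw [hG0, hGs, transpose_one, mul_one]⟩
    | succ l =>
      obtain ⟨L, hL, hHL⟩ := hmub k l (fun h => hij (congrArg Fin.succ h))
      refine ⟨L, hL, ?_⟩
      rw [hGs, hGs, transpose_smul, smul_mul, Matrix.mul_smul, hHL, smul_smul, smul_smul,
        show c⁻¹ * c⁻¹ * c = c⁻¹ by field_simp]

end Gram

section BlockEntries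

variable {ι κ : Type*} [DecidableEq ι] [Fintype κ] [DecidableEq κ] {c : ℝ}
  {G : ι → Matrix κ κ ℝ} {M : Matrix (ι × κ) (ι × κ) ℝ}

theorem smul_sub_one_apply_self (hM : ∀ i j p q, M (i, p) (j, q) = (G i * (G j)ᵀ) p q)
    {i : ι} (hGi : G i * (G i)ᵀ = 1) (p q : κ) : (c • (M - 1)) (i, p) (i, q) = 0 := by
  have hone : (1 : Matrix (ι × κ) (ι × κ) ℝ) (i, p) (i, q) = (1 : Matrix κ κ ℝ) p q := by
    simp [one_apply]
  rw [Matrix.smul_apply, Matrix.sub_apply, hM, hGi, hone, sub_self, smul_zero]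

theorem smul_sub_one_apply_of_ne (hM : ∀ i j p q, M (i, p) (j, q) = (G i * (G j)ᵀ) p q)
    {i j : ι} (hij : i ≠ j) (p q : κ) :
    (c • (M - 1)) (i, p) (j, q) = c * (G i * (G j)ᵀ) p q := by
  rw [Matrix.smul_apply, Matrix.sub_apply, hM, one_apply_ne (by simp [hij]), sub_zero, smul_eq_mul]

end BlockEntries

theorem gram_B_entries_and_support_general (n m : ℕ) (hn : 0 < n)
    (H : Fin m → Matrix (Fin (4*n^2)) (Fin (4*n^2)) ℝ)
    (hsign : ∀ k, signMatrix (H k))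
    (hHad : ∀ k, H k * (H k)ᵀ = ((4 * n ^ 2 : ℕ) : ℝ) • 1)
    (hmub : ∀ k l, k ≠ l → ∃ L, signMatrix L ∧ H k * (H l)ᵀ = (2 * (n : ℝ)) • L)
    (G : Fin (m+1) → Matrix (Fin (4*n^2)) (Fin (4*n^2)) ℝ)
    (hG0 : G 0 = 1)
    (hGs : ∀ k : Fin m, G k.succ = (2 * (n : ℝ))⁻¹ • H k)
    (M : Matrix (Fin (m+1) × Fin (4*n^2)) (Fin (m+1) × Fin (4*n^2)) ℝ)
    (hM : ∀ i j p q, M (i, p) (j, q) = (G i * (G j)ᵀ) p q)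
    (B₁ B₂ : Matrix (Fin (m+1) × Fin (4*n^2)) (Fin (m+1) × Fin (4*n^2)) ℝ)
    (hB₁01 : ∀ x y, B₁ x y = 0 ∨ B₁ x y = 1)
    (hB₂01 : ∀ x y, B₂ x y = 0 ∨ B₂ x y = 1)
    (hdisj : ∀ x y, B₁ x y = 0 ∨ B₂ x y = 0)
    (hB : B₁ - B₂ = (2 * (n : ℝ)) • (M - 1)) :
    (∀ x y, ((2 * (n : ℝ)) • (M - 1)) x y ∈ ({-1, 0, 1} : Set ℝ)) ∧
    B₁ + B₂ = Matrix.of (fun x y : Fin (m+1) × Fin (4*n^2) =>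
      if x.1 = y.1 then (0 : ℝ) else 1) := by
  have hc : (2 * (n : ℝ)) ≠ 0 := by positivity
  have hHad' : ∀ k, H k * (H k)ᵀ = (2 * (n : ℝ)) ^ 2 • 1 := fun k => by
    rw [hHad]; push_cast; ring_nf
  have hdiag : ∀ i p q, ((2 * (n : ℝ)) • (M - 1)) (i, p) (i, q) = 0 := fun i =>
    smul_sub_one_apply_self hM (gram_self hc hHad' hG0 hGs i)
  have hoff : ∀ i j p q, i ≠ j → ((2 * (n : ℝ)) • (M - 1)) (i, p) (j, q) = 1 ∨
      ((2 * (n : ℝ)) • (M - 1)) (i, p) (j, q) = -1 := fun i j p q hij => by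
    obtain ⟨L, hL, hGL⟩ := exists_signMatrix_gram_of_ne hc hsign hmub hG0 hGs hij
    rw [smul_sub_one_apply_of_ne hM hij, hGL, Matrix.smul_apply, smul_eq_mul, mul_inv_cancel_left₀ hc]
    exact hL p q
  refine ⟨fun ⟨i, p⟩ ⟨j, q⟩ => ?_, ?_⟩
  · by_cases hij : i = j
    · subst hij; simp [hdiag]
    · rcases hoff i j p q hij with h | h <;> simp [h]
  · ext ⟨i, p⟩ ⟨j, q⟩
    rw [Matrix.add_apply, add_eq_abs_sub_of_zero_one (hB₁01 _ _) (hB₂01 _ _) (hdisj _ _), ← Matrix.sub_apply,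
      hB, of_apply]
    by_cases hij : i = j
    · subst hij; simp [hdiag]
    · rcases hoff i j p q hij with h | h <;> simp [h, hij]

/-- For `m ≥ 2` mutually unbiased regular Hadamard matrices of order `4n²`, the
matrix `B = 2n(M − I)` has entries in `{−1,0,1}`, and its positive and negative
parts `B₁, B₂` satisfy `B₁ + B₂ = (J_{m+1} − I_{m+1}) ⊗ J_{4n²}`. -/
theorem gram_B_entries_and_support (n m : ℕ) (hn : 0 < n) (hm : 2 ≤ m)
    (H : Fin m → Matrix (Fin (4*n^2)) (Fin (4*n^2)) ℝ)
    (hsign : ∀ k, signMatrix (H k))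
    (hHad : ∀ k, H k * (H k)ᵀ = ((4 * n ^ 2 : ℕ) : ℝ) • 1)
    (hrow : ∀ k p, ∑ q, H k p q = 2 * (n : ℝ))
    (hcol : ∀ k q, ∑ p, H k p q = 2 * (n : ℝ))
    (hmub : ∀ k l, k ≠ l → ∃ L, signMatrix L ∧ H k * (H l)ᵀ = (2 * (n : ℝ)) • L)
    (G : Fin (m+1) → Matrix (Fin (4*n^2)) (Fin (4*n^2)) ℝ)
    (hG0 : G 0 = 1)
    (hGs : ∀ k : Fin m, G k.succ = (2 * (n : ℝ))⁻¹ • H k)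
    (M : Matrix (Fin (m+1) × Fin (4*n^2)) (Fin (m+1) × Fin (4*n^2)) ℝ)
    (hM : ∀ i j p q, M (i, p) (j, q) = (G i * (G j)ᵀ) p q)
    (B₁ B₂ : Matrix (Fin (m+1) × Fin (4*n^2)) (Fin (m+1) × Fin (4*n^2)) ℝ)
    (hB₁01 : ∀ x y, B₁ x y = 0 ∨ B₁ x y = 1)
    (hB₂01 : ∀ x y, B₂ x y = 0 ∨ B₂ x y = 1)
    (hdisj : ∀ x y, B₁ x y = 0 ∨ B₂ x y = 0)
    (hB : B₁ - B₂ = (2 * (n : ℝ)) • (M - 1)) :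
    (∀ x y, ((2 * (n : ℝ)) • (M - 1)) x y ∈ ({-1, 0, 1} : Set ℝ)) ∧
    B₁ + B₂ = Matrix.of (fun x y : Fin (m+1) × Fin (4*n^2) =>
      if x.1 = y.1 then (0 : ℝ) else 1) :=
  gram_B_entries_and_support_general n m hn H hsign hHad hmub G hG0 hGs M hM B₁ B₂ hB₁01 hB₂01 hdisj
    hB
end

section
/- In the 5-class scheme arising from mutually unbiased Bush-type Hadamard matrices, (A₄ + A₅)(A₄ − A₅) = 0; consequently A₄² = A₅². -/
open Matrix BigOperators

/-! Write `S = A₄ + A₅` and `D = A₄ - A₅ = 2n (M - 1) - A₃`. As `B₁`, `B₂` are disjoint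
0/1-matrices, `S = |B₁ - B₂| - A₃`, and since `M` is the identity on diagonal blocks and `±1/2n`
elsewhere, `S = (J - I) ⊗ (J - I ⊗ J)`: every row of `S` is constant along each `2n`-block of
columns. Each normalized `G i` has the block row and column sums of the identity (the Bush
property), hence so does every `G i * (G j)ᵀ`, and this makes all `2n`-block column sums of `D`
vanish. So `S D = 0`; as `S` and `D` are symmetric, also `D S = (S D)ᵀ = 0`, and
`2 (A₄² - A₅²) = S D + D S = 0`. -/

open Finset

instance Matrix.instIsAddTorsionFree {m n α : Type*} [AddMonoid α] [IsAddTorsionFree α] :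
    IsAddTorsionFree (Matrix m n α) :=
  inferInstanceAs (IsAddTorsionFree (m → n → α))

theorem mul_self_eq_mul_self_of_add_mul_sub_eq_zero {R : Type*} [Ring R] [IsAddTorsionFree R]
    {a b : R} (h₁ : (a + b) * (a - b) = 0) (h₂ : (a - b) * (a + b) = 0) : a * a = b * b := by
  have h : 2 • (a * a - b * b) = (a + b) * (a - b) + (a - b) * (a + b) := by noncomm_ring
  rwa [h₁, h₂, add_zero, two_nsmul_eq_zero, sub_eq_zero] at h

theorem abs_sub_eq_add_of_zero_or_one {R : Type*} [Ring R] [LinearOrder R] [IsOrderedRing R]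
    {a b : R} (ha : a = 0 ∨ a = 1) (hb : b = 0 ∨ b = 1) (hab : a = 0 ∨ b = 0) :
    |a - b| = a + b := by
  rcases ha with rfl | rfl <;> rcases hb with rfl | rfl <;> simp_all

theorem signMatrix.abs_apply {α : Type*} {H : Matrix α α ℝ} (hH : signMatrix H) (p q : α) :
    |H p q| = 1 := by
  rcases hH p q with h | h <;> simp [h]

theorem Matrix.mul_eq_zero_of_const_of_sum_eq_zero {X Z I B A R : Type*} [Fintype I] [Fintype B]
    [Fintype A] [CommSemiring R] {S : Matrix X (I × B × A) R} {D : Matrix (I × B × A) Z R}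
    (s : X → I → B → R) (hS : ∀ x j b a, S x (j, b, a) = s x j b)
    (hD : ∀ j b z, ∑ a, D (j, b, a) z = 0) : S * D = 0 := by
  ext x z
  simp only [mul_apply, Fintype.sum_prod_type, hS, ← mul_sum, hD, mul_zero, sum_const_zero,
    zero_apply]

section UnitBlockSums

variable {B A R : Type*} [Fintype A] [DecidableEq B] [CommSemiring R]

/-- With `E = 1_B ⊗ J_A` (`J` the all-ones matrix), this says `E * P = P * E = E`. -/
structure HasUnitBlockSums (P : Matrix (B × A) (B × A) R) : Prop where
  block_col_sum : ∀ b c d, ∑ a, P (b, a) (c, d) = if b = c then 1 else 0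
  block_row_sum : ∀ b a c, ∑ d, P (b, a) (c, d) = if b = c then 1 else 0

theorem hasUnitBlockSums_one [DecidableEq A] : HasUnitBlockSums (1 : Matrix (B × A) (B × A) R) where
  block_col_sum b c d := by simp [one_apply, ite_and]
  block_row_sum b a c := by simp [one_apply, ite_and]

theorem HasUnitBlockSums.sum_mul_transpose_apply [Fintype B] {P Q : Matrix (B × A) (B × A) R}
    (hP : HasUnitBlockSums P) (hQ : HasUnitBlockSums Q) (b c d) :
    ∑ a, (P * Qᵀ) (b, a) (c, d) = if b = c then 1 else 0 := by
  calc ∑ a, (P * Qᵀ) (b, a) (c, d)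
      = ∑ e, ∑ f, (∑ a, P (b, a) (e, f)) * Q (c, d) (e, f) := by
        simp only [mul_apply, transpose_apply, sum_mul]
        rw [sum_comm, Fintype.sum_prod_type]
    _ = ∑ f, Q (c, d) (b, f) := by simp [hP.block_col_sum]
    _ = if b = c then 1 else 0 := by rw [hQ.block_row_sum]; exact if_congr eq_comm rfl rfl

end UnitBlockSums

theorem isBushType.hasUnitBlockSums {n : ℕ} (hn : 0 < n)
    {H : Matrix (Fin (2*n) × Fin (2*n)) (Fin (2*n) × Fin (2*n)) ℝ} (hH : isBushType n H) :
    HasUnitBlockSums ((2 * (n : ℝ))⁻¹ • H) := by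
  have hdiag : (2 * (n : ℝ))⁻¹ * ∑ _a : Fin (2*n), 1 = 1 := by
    simp only [sum_const, card_univ, Fintype.card_fin, nsmul_one, Nat.cast_mul, Nat.cast_two]
    exact inv_mul_cancel₀ (by positivity)
  refine ⟨fun b c d => ?_, fun b a c => ?_⟩ <;>
    simp only [Matrix.smul_apply, smul_eq_mul, ← mul_sum] <;> split_ifs with h
  · simp only [h, hH.1, hdiag]
  · rw [(hH.2 b c h).2 d, mul_zero]
  · simp only [h, hH.1, hdiag]
  · rw [(hH.2 b c h).1 a, mul_zero]

section Family

variable {n m : ℕ} {H : Fin m → Matrix (Fin (2*n) × Fin (2*n)) (Fin (2*n) × Fin (2*n)) ℝ}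
  {G : Fin (m+1) → Matrix (Fin (2*n) × Fin (2*n)) (Fin (2*n) × Fin (2*n)) ℝ}

theorem family_hasUnitBlockSums (hn : 0 < n) (hBush : ∀ k, isBushType n (H k)) (hG0 : G 0 = 1)
    (hGs : ∀ k : Fin m, G k.succ = (2 * (n : ℝ))⁻¹ • H k) (i : Fin (m+1)) :
    HasUnitBlockSums (G i) := by
  induction i using Fin.cases with
  | zero => exact hG0 ▸ hasUnitBlockSums_one
  | succ k => exact hGs k ▸ (hBush k).hasUnitBlockSums hn

theorem family_mul_transpose_self (hn : 0 < n)
    (hHad : ∀ k, H k * (H k)ᵀ = ((4 * n ^ 2 : ℕ) : ℝ) • 1) (hG0 : G 0 = 1)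
    (hGs : ∀ k : Fin m, G k.succ = (2 * (n : ℝ))⁻¹ • H k) (i : Fin (m+1)) :
    G i * (G i)ᵀ = 1 := by
  induction i using Fin.cases with
  | zero => simp [hG0]
  | succ k =>
    have hn' : (n : ℝ) ≠ 0 := by positivity
    rw [hGs k, transpose_smul, Matrix.smul_mul, Matrix.mul_smul, hHad k, smul_smul, smul_smul,
      show (2 * (n : ℝ))⁻¹ * (2 * (n : ℝ))⁻¹ * ((4 * n ^ 2 : ℕ) : ℝ) = 1 by
      push_cast; field_simp; ring, one_smul]

theorem abs_family_mul_transpose_apply (hsign : ∀ k, signMatrix (H k))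
    (hmub : ∀ k l, k ≠ l → ∃ L, signMatrix L ∧ H k * (H l)ᵀ = (2 * (n : ℝ)) • L)
    (hG0 : G 0 = 1) (hGs : ∀ k : Fin m, G k.succ = (2 * (n : ℝ))⁻¹ • H k)
    {i j : Fin (m+1)} (hij : i ≠ j) (p q) :
    |(G i * (G j)ᵀ) p q| = (2 * (n : ℝ))⁻¹ := by
  induction i using Fin.cases with
  | zero =>
    induction j using Fin.cases with
    | zero => exact absurd rfl hij
    | succ l => simp [hG0, hGs, abs_mul, (hsign l).abs_apply]
  | succ k =>
    induction j using Fin.cases with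
    | zero => simp [hG0, hGs, abs_mul, (hsign k).abs_apply]
    | succ l =>
      obtain ⟨L, hL, hHL⟩ := hmub k l (fun h => hij (h ▸ rfl))
      have hc : (2 * (n : ℝ))⁻¹ * (2 * (n : ℝ))⁻¹ * (2 * n) = (2 * (n : ℝ))⁻¹ := by
        simpa using mul_self_mul_inv (2 * (n : ℝ))⁻¹
      rw [hGs k, hGs l, transpose_smul, Matrix.smul_mul, Matrix.mul_smul, hHL, smul_smul, smul_smul,
        hc]
      simp [abs_mul, hL.abs_apply]

end Family

section Gram

variable {I B A : Type*} [Fintype B] [Fintype A]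
  {G : I → Matrix (B × A) (B × A) ℝ} {M : Matrix (I × B × A) (I × B × A) ℝ}

theorem isSymm_of_gram (hM : ∀ i j p q, M (i, p) (j, q) = (G i * (G j)ᵀ) p q) : M.IsSymm :=
  IsSymm.ext fun ⟨i, p⟩ ⟨j, q⟩ => by
    rw [hM, hM, ← transpose_apply (G i * (G j)ᵀ), transpose_mul, transpose_transpose]

theorem abs_smul_sub_one_apply_of_gram [DecidableEq I] [DecidableEq B] [DecidableEq A]
    (hM : ∀ i j p q, M (i, p) (j, q) = (G i * (G j)ᵀ) p q)
    {c : ℝ} (hc : 0 < c) (hself : ∀ i, G i * (G i)ᵀ = 1)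
    (hoff : ∀ i j, i ≠ j → ∀ p q, |(G i * (G j)ᵀ) p q| = c⁻¹) (x y : I × B × A) :
    |(c • (M - 1)) x y| = if x.1 = y.1 then 0 else 1 := by
  obtain ⟨i, p⟩ := x
  obtain ⟨j, q⟩ := y
  rw [Matrix.smul_apply, Matrix.sub_apply, hM, smul_eq_mul]
  split_ifs with h
  · subst h
    simp [hself, one_apply]
  · rw [one_apply_ne (by simp [h]), sub_zero, abs_mul, hoff i j h, abs_of_pos hc,
      mul_inv_cancel₀ hc.ne']

theorem sum_apply_of_gram [DecidableEq B] (hM : ∀ i j p q, M (i, p) (j, q) = (G i * (G j)ᵀ) p q)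
    (hG : ∀ i, HasUnitBlockSums (G i)) (j b k c d) :
    ∑ a, M (j, b, a) (k, c, d) = if b = c then 1 else 0 := by
  simp only [hM]
  exact (hG j).sum_mul_transpose_apply (hG k) b c d

end Gram

theorem sum_card_smul_sub_one_sub_apply {I B A R : Type*} [Fintype A] [DecidableEq I]
    [DecidableEq B] [DecidableEq A] [CommRing R] {M A₃ : Matrix (I × B × A) (I × B × A) R}
    (hM : ∀ j b k c d, ∑ a, M (j, b, a) (k, c, d) = if b = c then 1 else 0)
    (hA₃ : A₃ = of fun x y => if x.1 ≠ y.1 ∧ x.2.1 = y.2.1 then 1 else 0) (j b z) :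
    ∑ a, ((Fintype.card A : R) • (M - 1) - A₃) (j, b, a) z = 0 := by
  obtain ⟨k, c, d⟩ := z
  simp only [Matrix.sub_apply, Matrix.smul_apply, smul_eq_mul, sum_sub_distrib, ← mul_sum, hM, hA₃,
    of_apply, one_apply, Prod.mk.injEq]
  by_cases hjk : j = k <;> by_cases hbc : b = c <;> simp [hjk, hbc]

theorem sub_add_eq_of_abs_sub_apply {I B A : Type*} [DecidableEq I] [DecidableEq B]
    {B₁ B₂ A₃ : Matrix (I × B × A) (I × B × A) ℝ}
    (hB₁ : ∀ x y, B₁ x y = 0 ∨ B₁ x y = 1) (hB₂ : ∀ x y, B₂ x y = 0 ∨ B₂ x y = 1)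
    (hdisj : ∀ x y, B₁ x y = 0 ∨ B₂ x y = 0)
    (habs : ∀ x y, |(B₁ - B₂) x y| = if x.1 = y.1 then 0 else 1)
    (hA₃ : A₃ = of fun x y => if x.1 ≠ y.1 ∧ x.2.1 = y.2.1 then 1 else 0) :
    B₁ - A₃ + B₂ = of fun x y => if x.1 ≠ y.1 ∧ x.2.1 ≠ y.2.1 then 1 else 0 := by
  ext x y
  have h := habs x y
  rw [Matrix.sub_apply, abs_sub_eq_add_of_zero_or_one (hB₁ x y) (hB₂ x y) (hdisj x y)] at h
  simp only [Matrix.add_apply, Matrix.sub_apply, hA₃, of_apply]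
  split_ifs at h ⊢ <;> first | linarith | tauto

theorem mubh_A4_A5_products_general (n m : ℕ) (hn : 0 < n)
    (H : Fin m → Matrix (Fin (2*n) × Fin (2*n)) (Fin (2*n) × Fin (2*n)) ℝ)
    (hsign : ∀ k, signMatrix (H k))
    (hHad : ∀ k, H k * (H k)ᵀ = ((4 * n ^ 2 : ℕ) : ℝ) • 1)
    (hBush : ∀ k, isBushType n (H k))
    (hmub : ∀ k l, k ≠ l → ∃ L, signMatrix L ∧ H k * (H l)ᵀ = (2 * (n : ℝ)) • L)
    (G : Fin (m+1) → Matrix (Fin (2*n) × Fin (2*n)) (Fin (2*n) × Fin (2*n)) ℝ)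
    (hG0 : G 0 = 1)
    (hGs : ∀ k : Fin m, G k.succ = (2 * (n : ℝ))⁻¹ • H k)
    (M : Matrix (Fin (m+1) × Fin (2*n) × Fin (2*n)) (Fin (m+1) × Fin (2*n) × Fin (2*n)) ℝ)
    (hM : ∀ i j p q, M (i, p) (j, q) = (G i * (G j)ᵀ) p q)
    (B₁ B₂ : Matrix (Fin (m+1) × Fin (2*n) × Fin (2*n)) (Fin (m+1) × Fin (2*n) × Fin (2*n)) ℝ)
    (hB₁01 : ∀ x y, B₁ x y = 0 ∨ B₁ x y = 1)
    (hB₂01 : ∀ x y, B₂ x y = 0 ∨ B₂ x y = 1)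
    (hdisj : ∀ x y, B₁ x y = 0 ∨ B₂ x y = 0)
    (hB : B₁ - B₂ = (2 * (n : ℝ)) • (M - 1))
    (A₃ A₄ A₅ : Matrix (Fin (m+1) × Fin (2*n) × Fin (2*n)) (Fin (m+1) × Fin (2*n) × Fin (2*n)) ℝ)
    (hA₃ : A₃ = Matrix.of (fun x y : Fin (m+1) × Fin (2*n) × Fin (2*n) =>
      if x.1 ≠ y.1 ∧ x.2.1 = y.2.1 then (1 : ℝ) else 0))
    (hA₄ : A₄ = B₁ - A₃)
    (hA₅ : A₅ = B₂)
    :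
    (A₄ + A₅) * (A₄ - A₅) = 0 ∧ A₄ * A₄ = A₅ * A₅ := by
  have hD : A₄ - A₅ = (Fintype.card (Fin (2*n)) : ℝ) • (M - 1) - A₃ := by
    rw [hA₄, hA₅, Fintype.card_fin, Nat.cast_mul, Nat.cast_two, ← hB]
    abel
  have hS : A₄ + A₅ = of fun x y => if x.1 ≠ y.1 ∧ x.2.1 ≠ y.2.1 then 1 else 0 := by
    rw [hA₄, hA₅]
    refine sub_add_eq_of_abs_sub_apply hB₁01 hB₂01 hdisj ?_ hA₃
    rw [hB]
    exact abs_smul_sub_one_apply_of_gram hM (by positivity)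
      (family_mul_transpose_self hn hHad hG0 hGs)
      fun _ _ hij => abs_family_mul_transpose_apply hsign hmub hG0 hGs hij
  have h₁ : (A₄ + A₅) * (A₄ - A₅) = 0 := by
    rw [hD]
    refine mul_eq_zero_of_const_of_sum_eq_zero (fun x j b => if x.1 ≠ j ∧ x.2.1 ≠ b then 1 else 0)
      (fun x j b a => by rw [hS, of_apply]) (sum_card_smul_sub_one_sub_apply ?_ hA₃)
    exact sum_apply_of_gram hM (family_hasUnitBlockSums hn hBush hG0 hGs)
  have h₂ : (A₄ - A₅) * (A₄ + A₅) = 0 := by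
    have hSsymm : (A₄ + A₅)ᵀ = A₄ + A₅ := by
      rw [hS]; ext; simp [eq_comm]
    have hDsymm : (A₄ - A₅)ᵀ = A₄ - A₅ := by
      rw [hD, transpose_sub, transpose_smul, transpose_sub, transpose_one, isSymm_of_gram hM, hA₃]
      ext; simp [eq_comm]
    rw [← hSsymm, ← hDsymm, ← transpose_mul, h₁, transpose_zero]
  exact ⟨h₁, mul_self_eq_mul_self_of_add_mul_sub_eq_zero h₁ h₂⟩

/-- In the 5-class scheme arising from mutually unbiased Bush-type Hadamard
matrices, `(A₄ + A₅)(A₄ − A₅) = 0`, hence `A₄² = A₅²`. -/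
theorem mubh_A4_A5_products (n m : ℕ) (hn : 0 < n)
    (H : Fin m → Matrix (Fin (2*n) × Fin (2*n)) (Fin (2*n) × Fin (2*n)) ℝ)
    (hsign : ∀ k, signMatrix (H k))
    (hHad : ∀ k, H k * (H k)ᵀ = ((4 * n ^ 2 : ℕ) : ℝ) • 1)
    (hBush : ∀ k, isBushType n (H k))
    (hmub : ∀ k l, k ≠ l → ∃ L, signMatrix L ∧ H k * (H l)ᵀ = (2 * (n : ℝ)) • L)
    (G : Fin (m+1) → Matrix (Fin (2*n) × Fin (2*n)) (Fin (2*n) × Fin (2*n)) ℝ)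
    (hG0 : G 0 = 1)
    (hGs : ∀ k : Fin m, G k.succ = (2 * (n : ℝ))⁻¹ • H k)
    (M : Matrix (Fin (m+1) × Fin (2*n) × Fin (2*n)) (Fin (m+1) × Fin (2*n) × Fin (2*n)) ℝ)
    (hM : ∀ i j p q, M (i, p) (j, q) = (G i * (G j)ᵀ) p q)
    (B₁ B₂ : Matrix (Fin (m+1) × Fin (2*n) × Fin (2*n)) (Fin (m+1) × Fin (2*n) × Fin (2*n)) ℝ)
    (hB₁01 : ∀ x y, B₁ x y = 0 ∨ B₁ x y = 1)
    (hB₂01 : ∀ x y, B₂ x y = 0 ∨ B₂ x y = 1)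
    (hdisj : ∀ x y, B₁ x y = 0 ∨ B₂ x y = 0)
    (hB : B₁ - B₂ = (2 * (n : ℝ)) • (M - 1))
    (A₀ A₁ A₂ A₃ A₄ A₅ : Matrix (Fin (m+1) × Fin (2*n) × Fin (2*n)) (Fin (m+1) × Fin (2*n) × Fin (2*n)) ℝ)
    (hA₀ : A₀ = 1)
    (hA₁ : A₁ = Matrix.of (fun x y : Fin (m+1) × Fin (2*n) × Fin (2*n) =>
      if x.1 = y.1 ∧ x.2.1 = y.2.1 ∧ x.2.2 ≠ y.2.2 then (1 : ℝ) else 0))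
    (hA₂ : A₂ = Matrix.of (fun x y : Fin (m+1) × Fin (2*n) × Fin (2*n) =>
      if x.1 = y.1 ∧ x.2.1 ≠ y.2.1 then (1 : ℝ) else 0))
    (hA₃ : A₃ = Matrix.of (fun x y : Fin (m+1) × Fin (2*n) × Fin (2*n) =>
      if x.1 ≠ y.1 ∧ x.2.1 = y.2.1 then (1 : ℝ) else 0))
    (hA₄ : A₄ = B₁ - A₃)
    (hA₅ : A₅ = B₂)
    :
    (A₄ + A₅) * (A₄ - A₅) = 0 ∧ A₄ * A₄ = A₅ * A₅ :=
  mubh_A4_A5_products_general n m hn H hsign hHad hBush hmub G hG0 hGs M hM B₁ B₂ hB₁01 hB₂01 hdisj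
    hB A₃ A₄ A₅ hA₃ hA₄ hA₅
end

section
/- The number m of mutually unbiased Bush-type Hadamard matrices of order 4n² satisfies m ≤ 2n − 1. -/
open Matrix BigOperators

/-!
Adjoin `2n • 1` to the family: it is unbiased with respect to every `±1` matrix, so there are
`m + 1` matrices `A`, each with `A Aᵀ = 4n² • 1`, pairwise unbiased, and with block row sums
`2n` on diagonal blocks and `0` elsewhere. Fix two blocks `i₁ ≠ i₂`, write `A_i` for the rows
of block `i` and `u_i` for the indicator row of block `i`, and put
`Z_A = A_{i₁}ᵀ A_{i₁} - A_{i₂}ᵀ A_{i₂}` and `D = u_{i₁}ᵀ u_{i₁} - u_{i₂}ᵀ u_{i₂}`.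
Since `⟪XᵀX, YᵀY⟫ = ‖X Yᵀ‖²` in the Frobenius inner product `⟪X, Y⟫ = vec X ⬝ᵥ vec Y`, every
pairing among these matrices is a sum of squares of entries of some `A Bᵀ` or of block row sums,
which the hypotheses determine: the `Z_A` are pairwise orthogonal of equal norm, all with the
same inner product with `D`. Bessel's inequality for `D` against the `Z_A` then gives
`m + 1 ≤ 2n`.
-/

theorem card_mul_sq_le_of_pairwise_orthogonal {ν κ : Type*} [Fintype ν] [Fintype κ]
    (v : ν → κ → ℝ) (w : κ → ℝ) {a b : ℝ} (ha : 0 ≤ a)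
    (horth : Pairwise fun i j => v i ⬝ᵥ v j = 0) (hv : ∀ i, v i ⬝ᵥ v i = a)
    (hvw : ∀ i, v i ⬝ᵥ w = b) :
    Fintype.card ν * b ^ 2 ≤ a * (w ⬝ᵥ w) := by
  have hss : (∑ i, v i) ⬝ᵥ (∑ i, v i) = Fintype.card ν * a := by
    have hcol : ∀ j, ∑ i, v i ⬝ᵥ v j = a := fun j => by
      rw [Finset.sum_eq_single j (fun i _ hi => horth hi) (by simp), hv]
    simp [sum_dotProduct, dotProduct_sum, hcol]
  have hsw : (∑ i, v i) ⬝ᵥ w = Fintype.card ν * b := by simp [sum_dotProduct, hvw]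
  have hcs : ((∑ i, v i) ⬝ᵥ w) ^ 2 ≤ ((∑ i, v i) ⬝ᵥ (∑ i, v i)) * (w ⬝ᵥ w) := by
    simpa only [dotProduct, sq] using Finset.sum_mul_sq_le_sq_mul_sq Finset.univ (∑ i, v i) w
  have hww : 0 ≤ w ⬝ᵥ w := by
    simpa only [dotProduct, sq] using Finset.sum_nonneg fun i _ => sq_nonneg (w i)
  rw [hss, hsw] at hcs
  rcases (Nat.cast_nonneg (Fintype.card ν) : (0:ℝ) ≤ Fintype.card ν).eq_or_lt with hc | hc
  · rw [← hc, zero_mul]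
    exact mul_nonneg ha hww
  · nlinarith

theorem vec_dotProduct_vec_self {m n R : Type*} [Fintype m] [Fintype n] [CommSemiring R]
    (M : Matrix m n R) : vec M ⬝ᵥ vec M = ∑ i, ∑ j, M i j ^ 2 := by
  simp only [dotProduct, vec, sq, ← Finset.univ_product_univ, Finset.sum_product]
  exact Finset.sum_comm

theorem vec_gram_dotProduct_vec_gram {k l m R : Type*} [Fintype k] [Fintype l] [Fintype m]
    [CommSemiring R] (X : Matrix l k R) (Y : Matrix m k R) :
    vec (Xᵀ * X) ⬝ᵥ vec (Yᵀ * Y) = ∑ a, ∑ b, (X * Yᵀ) a b ^ 2 := by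
  rw [← vec_dotProduct_vec_self]
  simp only [vec_dotProduct_vec, transpose_mul, transpose_transpose, Matrix.mul_assoc]
  rw [trace_mul_comm Y]
  simp only [Matrix.mul_assoc]

theorem vec_gram_sub_dotProduct_vec_gram_sub {k l l' m m' R : Type*} [Fintype k] [Fintype l]
    [Fintype l'] [Fintype m] [Fintype m'] [CommRing R] (X : Matrix l k R) (X' : Matrix l' k R)
    (Y : Matrix m k R) (Y' : Matrix m' k R) :
    vec (Xᵀ * X - X'ᵀ * X') ⬝ᵥ vec (Yᵀ * Y - Y'ᵀ * Y') =
      (∑ a, ∑ b, (X * Yᵀ) a b ^ 2) - (∑ a, ∑ b, (X * Y'ᵀ) a b ^ 2)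
        - (∑ a, ∑ b, (X' * Yᵀ) a b ^ 2) + (∑ a, ∑ b, (X' * Y'ᵀ) a b ^ 2) := by
  simp only [vec_sub, sub_dotProduct, dotProduct_sub, vec_gram_dotProduct_vec_gram]
  ring

section Blocks

variable {α β κ R : Type*}

def blockRows (A : Matrix (β × α) κ R) (i : β) : Matrix α κ R :=
  A.submatrix (Prod.mk i) id

def blockIndicator [DecidableEq β] (j : β) : Matrix Unit (β × α) ℝ :=
  of fun _ q => if q.1 = j then 1 else 0

variable [Fintype α] [Fintype β]

theorem sum_sq_blockRows_mul_transpose_blockRows_of_sq_eq {A B : Matrix (β × α) (β × α) ℝ}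
    {c : ℝ} (hAB : ∀ p q, (A * Bᵀ) p q ^ 2 = c) (i j : β) :
    ∑ a, ∑ b, (blockRows A i * (blockRows B j)ᵀ) a b ^ 2 = Fintype.card α ^ 2 * c := by
  change ∑ a, ∑ b, (A * Bᵀ) (i, a) (j, b) ^ 2 = _
  simp [hAB, sq, mul_assoc]

variable [DecidableEq β]

theorem sum_sq_blockRows_mul_transpose_blockRows_self [DecidableEq α]
    {A : Matrix (β × α) (β × α) ℝ} {c : ℝ} (hA : A * Aᵀ = c • 1) (i j : β) :
    ∑ a, ∑ b, (blockRows A i * (blockRows A j)ᵀ) a b ^ 2 =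
      if i = j then Fintype.card α * c ^ 2 else 0 := by
  change ∑ a, ∑ b, (A * Aᵀ) (i, a) (j, b) ^ 2 = _
  split_ifs with hij
  · subst hij
    simp [hA, one_apply]
  · simp [hA, one_apply, hij]

theorem sum_sq_blockRows_mul_transpose_blockIndicator {A : Matrix (β × α) (β × α) ℝ} {s : ℝ}
    {i : β} (hA : ∀ a j, ∑ b, A (i, a) (j, b) = if i = j then s else 0) (j : β) :
    ∑ a, ∑ u, (blockRows A i * (blockIndicator (α := α) j)ᵀ) a u ^ 2 =
      if i = j then Fintype.card α * s ^ 2 else 0 := by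
  have hentry : ∀ a u, (blockRows A i * (blockIndicator (α := α) j)ᵀ) a u =
      ∑ b, A (i, a) (j, b) := fun a u => by
    simp only [blockRows, blockIndicator, mul_apply, transpose_apply, submatrix_apply, of_apply,
      id, mul_ite, mul_one, mul_zero, Fintype.sum_prod_type]
    rw [Finset.sum_eq_single j (fun k _ hk => by simp [hk]) (by simp)]
    simp
  simp only [hentry, hA]
  split_ifs <;> simp

theorem sum_sq_blockIndicator_mul_transpose_blockIndicator (i j : β) :
    ∑ u, ∑ u', (blockIndicator (α := α) i * (blockIndicator (α := α) j)ᵀ) u u' ^ 2 =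
      if i = j then (Fintype.card α : ℝ) ^ 2 else 0 := by
  split_ifs with hij
  · subst hij
    simp [blockIndicator, mul_apply, Fintype.sum_prod_type]
  · simp [blockIndicator, mul_apply, Fintype.sum_prod_type, Ne.symm hij]

end Blocks

theorem sum_smul_one_blockRow {α β : Type*} [Fintype α] [DecidableEq α] [DecidableEq β]
    (s : ℝ) (i : β) (a : α) (j : β) :
    ∑ b, (s • 1 : Matrix (β × α) (β × α) ℝ) (i, a) (j, b) = if i = j then s else 0 := by
  split_ifs with hij
  · subst hij
    simp [one_apply]
  · simp [one_apply, hij]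

theorem card_le_card_of_unbiased_bush {α β ν : Type*} [Fintype α] [Fintype β] [Fintype ν]
    [DecidableEq α] [DecidableEq β] [Nonempty α] [Nontrivial β]
    (A : ν → Matrix (β × α) (β × α) ℝ) {s : ℝ} (hs : s ≠ 0)
    (hgram : ∀ o, A o * (A o)ᵀ = s ^ 2 • 1)
    (hunbiased : Pairwise fun o o' => ∀ p q, (A o * (A o')ᵀ) p q ^ 2 = s ^ 2)
    (hrow : ∀ o i a j, ∑ b, A o (i, a) (j, b) = if i = j then s else 0) :
    Fintype.card ν ≤ Fintype.card α := by
  obtain ⟨i₁, i₂, hi⟩ := exists_pair_ne β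
  set t : ℝ := (Fintype.card α : ℝ)
  let Z : ν → Matrix (β × α) (β × α) ℝ := fun o =>
    (blockRows (A o) i₁)ᵀ * blockRows (A o) i₁ - (blockRows (A o) i₂)ᵀ * blockRows (A o) i₂
  let D : Matrix (β × α) (β × α) ℝ :=
    (blockIndicator i₁)ᵀ * blockIndicator i₁ - (blockIndicator i₂)ᵀ * blockIndicator i₂
  have hZZ : ∀ o, vec (Z o) ⬝ᵥ vec (Z o) = 2 * t * s ^ 4 := fun o => by
    simp only [Z, vec_gram_sub_dotProduct_vec_gram_sub,
      sum_sq_blockRows_mul_transpose_blockRows_self (hgram o), hi, hi.symm, ↓reduceIte]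
    ring
  have hZZ' : Pairwise fun o o' => vec (Z o) ⬝ᵥ vec (Z o') = 0 := fun o o' h => by
    simp only [Z, vec_gram_sub_dotProduct_vec_gram_sub,
      sum_sq_blockRows_mul_transpose_blockRows_of_sq_eq (hunbiased h)]
    ring
  have hZD : ∀ o, vec (Z o) ⬝ᵥ vec D = 2 * t * s ^ 2 := fun o => by
    simp only [Z, D, vec_gram_sub_dotProduct_vec_gram_sub,
      sum_sq_blockRows_mul_transpose_blockIndicator (hrow o _), hi, hi.symm, ↓reduceIte]
    ring
  have hDD : vec D ⬝ᵥ vec D = 2 * t ^ 2 := by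
    simp only [D, vec_gram_sub_dotProduct_vec_gram_sub,
      sum_sq_blockIndicator_mul_transpose_blockIndicator, hi, hi.symm, ↓reduceIte]
    ring
  have hbessel := card_mul_sq_le_of_pairwise_orthogonal (fun o => vec (Z o)) (vec D)
    (by positivity) hZZ' hZZ hZD
  rw [hDD] at hbessel
  have hscaled : (Fintype.card ν : ℝ) * (4 * t ^ 2 * s ^ 4) ≤ t * (4 * t ^ 2 * s ^ 4) := by
    linarith
  exact Nat.cast_le.mp (le_of_mul_le_mul_right hscaled (by positivity))

theorem signMatrix.sq_apply {α : Type*} {H : Matrix α α ℝ} (h : signMatrix H) (p q : α) :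
    H p q ^ 2 = 1 := by
  rcases h p q with h | h <;> simp [h]

theorem isBushType.sum_blockRow {n : ℕ}
    {H : Matrix (Fin (2*n) × Fin (2*n)) (Fin (2*n) × Fin (2*n)) ℝ} (h : isBushType n H)
    (i a j : Fin (2*n)) : ∑ b, H (i, a) (j, b) = if i = j then 2 * (n : ℝ) else 0 := by
  split_ifs with hij
  · subst hij
    simp [h.1]
  · exact (h.2 i j hij).1 a

/-- The number `m` of mutually unbiased Bush-type Hadamard matrices of order
`4n²` satisfies `m ≤ 2n − 1`. -/
theorem mubh_upper_bound (n m : ℕ) (hn : 0 < n)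
    (H : Fin m → Matrix (Fin (2*n) × Fin (2*n)) (Fin (2*n) × Fin (2*n)) ℝ)
    (hsign : ∀ k, signMatrix (H k))
    (hHad : ∀ k, H k * (H k)ᵀ = ((4 * n ^ 2 : ℕ) : ℝ) • 1)
    (hBush : ∀ k, isBushType n (H k))
    (hmub : ∀ k l, k ≠ l → ∃ L, signMatrix L ∧ H k * (H l)ᵀ = (2 * (n : ℝ)) • L) :
    m ≤ 2 * n - 1 := by
  have : Nontrivial (Fin (2 * n)) := Fin.nontrivial_iff_two_le.mpr (by omega)
  let A : Option (Fin m) → Matrix (Fin (2*n) × Fin (2*n)) (Fin (2*n) × Fin (2*n)) ℝ :=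
    fun o => o.elim ((2 * (n : ℝ)) • 1) H
  have hcard := card_le_card_of_unbiased_bush A (s := 2 * n) (by positivity) ?gram ?unbiased ?row
  · simp only [Fintype.card_option, Fintype.card_fin] at hcard
    omega
  case gram =>
    rintro (_ | k)
    · simp [A, smul_smul, sq]
    · simp only [A, Option.elim_some, hHad]
      push_cast
      rw [mul_pow]
      norm_num
  case unbiased =>
    rintro (_ | k) (_ | l) hkl p q
    · exact absurd rfl hkl
    · simp [A, mul_pow, (hsign l).sq_apply]
    · simp [A, mul_pow, (hsign k).sq_apply]
    · obtain ⟨L, hL, hHL⟩ := hmub k l fun h => hkl (congrArg some h)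
      simp [A, hHL, mul_pow, hL.sq_apply]
  case row =>
    rintro (_ | k) i a j
    · exact sum_smul_one_blockRow _ i a j
    · exact (hBush k).sum_blockRow i a j
end

section
/- Let A₀,…,A₅ be the 5-class scheme of mutually unbiased Bush-type Hadamard matrices of order 4n², and define the 9 matrices Ã₀ = diag(A₀,A₀), Ã₁ = diag(A₁,A₁), Ã₂ = antidiag(A₁,A₁), Ã₃ = [[A₂,A₂],[A₂,A₂]], Ã₄ = diag(A₃,A₃), Ã₅ = antidiag(A₃,A₃), Ã₆ = [[A₄,A₅],[A₅,A₄]], Ã₇ = [[A₅,A₄],[A₄,A₅]], Ã₈ = antidiag(A₀,A₀). Then Ã₀,…,Ã₈ form a symmetric 8-class association scheme. -/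
open Matrix BigOperators

/-!
Write `[[U, V], [V, U]]` for the symmetric `2 × 2` block matrix, so that each `Ã_i` has this
form with `U, V ∈ {0, A₀, …, A₅}`. These block matrices multiply like the group algebra of `ℤ/2`:
the product of `[[U, V], [V, U]]` and `[[U', V'], [V', U']]` has sum part `(U + V)(U' + V')` and
difference part `(U - V)(U' - V')`. Hence the span of the `Ã_i` is closed under multiplication
once the sums `U + V` and the differences `U - V` each span an algebra.

The sums span `⟨A₀, A₁, A₂, A₃, A₄ + A₅⟩ = ⟨I, P, K, Q, J⟩`, where `P = I ⊗ I ⊗ J`,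
`K = I ⊗ J ⊗ J`, `Q = J ⊗ I ⊗ J`; this is closed by Kronecker arithmetic. The differences span
`⟨A₀, A₁, A₃, A₄ - A₅⟩ = ⟨I, P, Q, M⟩`, where `M` is the Gram matrix of the blocks `G_i`: as every
`G_i` is orthogonal and fixes `I ⊗ J` (the Bush property), `M² = (m + 1) M`, `MP = PM = Q` and
`MQ = QM = (m + 1) Q`. Both identifications rest on `A₄ ± A₅ = B₁ ± B₂ - A₃`, where
`B₁ - B₂ = 2n (M - I)` and `B₁ + B₂ = J - K`: the `0/1` matrices `B₁, B₂` are the positive and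
negative parts of `2n (M - I)`, whose entries vanish on the diagonal blocks and are `±1` off them
by unbiasedness.
-/

namespace MUBHScheme

open Kronecker Submodule

section Ones

variable {α β R : Type*}

def ones (α R : Type*) [One R] : Matrix α α R := of fun _ _ => 1

@[simp] theorem ones_apply [One R] (x y : α) : ones α R x y = 1 := rfl

theorem isSymm_ones [One R] : (ones α R).IsSymm := rfl

theorem ones_mul_ones [Fintype α] [NonAssocSemiring R] :
    ones α R * ones α R = (Fintype.card α : R) • ones α R := by
  ext; simp [mul_apply]

theorem ones_kronecker_ones [MulOneClass R] : ones α R ⊗ₖ ones β R = ones (α × β) R := by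
  ext; simp

end Ones

theorem _root_.Matrix.IsSymm.kronecker {l n R : Type*} [Mul R] {A : Matrix l l R} {B : Matrix n n R}
    (hA : A.IsSymm) (hB : B.IsSymm) : (A ⊗ₖ B).IsSymm := by
  rw [IsSymm, ← kroneckerMap_transpose, hA.eq, hB.eq]

theorem isSymm_of_isSymm_add_of_isSymm_sub {n K : Type*} [Field K] [NeZero (2 : K)]
    {A B : Matrix n n K} (h₁ : (A + B).IsSymm) (h₂ : (A - B).IsSymm) : A.IsSymm := by
  have hA : A = (2⁻¹ : K) • ((A + B) + (A - B)) := by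
    ext
    simp only [Matrix.smul_apply, Matrix.add_apply, Matrix.sub_apply, smul_eq_mul]
    field_simp
    ring
  rw [hA]
  exact (h₁.add h₂).smul _

theorem mul_mem_span_of_mul_mem_span {R A : Type*} [CommSemiring R] [Semiring A] [Algebra R A]
    {s : Set A} (hs : ∀ x ∈ s, ∀ y ∈ s, x * y ∈ span R s) {x y : A}
    (hx : x ∈ span R s) (hy : y ∈ span R s) : x * y ∈ span R s := by
  have hle : span R s * span R s ≤ span R s := by
    rw [span_mul_span, span_le]
    rintro _ ⟨a, ha, b, hb, rfl⟩
    exact hs a ha b hb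
  exact hle (mul_mem_mul hx hy)

theorem span_five_eq_span_sub {R M : Type*} [Ring R] [AddCommGroup M] [Module R M]
    (a b c d e : M) :
    span R {a, b, c, d, e} = span R {a, b - a, c - b, d - b, e - c - (d - b)} := by
  set S := span R {a, b - a, c - b, d - b, e - c - (d - b)}
  have mem : ∀ x ∈ ({a, b - a, c - b, d - b, e - c - (d - b)} : Set M), x ∈ S :=
    fun x hx => subset_span hx
  have ha : a ∈ S := mem a (by simp)
  have hb : b ∈ S := (sub_mem_iff_left S ha).mp (mem _ (by simp))
  have hc : c ∈ S := (sub_mem_iff_left S hb).mp (mem _ (by simp))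
  have hd : d ∈ S := (sub_mem_iff_left S hb).mp (mem _ (by simp))
  have he : e ∈ S := (sub_mem_iff_left S hc).mp
    ((sub_mem_iff_left S (sub_mem hd hb)).mp (mem _ (by simp)))
  apply le_antisymm <;> rw [span_le] <;>
    simp only [Set.insert_subset_iff, Set.singleton_subset_iff, SetLike.mem_coe]
  · exact ⟨ha, hb, hc, hd, he⟩
  · have mem' : ∀ x ∈ ({a, b, c, d, e} : Set M), x ∈ span R {a, b, c, d, e} :=
      fun x hx => subset_span hx
    refine ⟨mem' _ (by simp), ?_, ?_, ?_, ?_⟩ <;>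
      repeat' (first | apply sub_mem | exact mem' _ (by simp))

theorem span_four_eq_span_sub {K M : Type*} [Field K] [AddCommGroup M] [Module K M]
    (a b d m : M) {c : K} (hc : c ≠ 0) :
    span K {a, b, d, m} = span K {a, b - a, d - b, c • (m - a) - (d - b)} := by
  set S := span K {a, b - a, d - b, c • (m - a) - (d - b)}
  have mem : ∀ x ∈ ({a, b - a, d - b, c • (m - a) - (d - b)} : Set M), x ∈ S :=
    fun x hx => subset_span hx
  have ha : a ∈ S := mem a (by simp)
  have hb : b ∈ S := (sub_mem_iff_left S ha).mp (mem _ (by simp))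
  have hd : d ∈ S := (sub_mem_iff_left S hb).mp (mem _ (by simp))
  have hm : m ∈ S := (sub_mem_iff_left S ha).mp ((smul_mem_iff S hc).mp
    ((sub_mem_iff_left S (sub_mem hd hb)).mp (mem _ (by simp))))
  apply le_antisymm <;> rw [span_le] <;>
    simp only [Set.insert_subset_iff, Set.singleton_subset_iff, SetLike.mem_coe]
  · exact ⟨ha, hb, hd, hm⟩
  · have mem' : ∀ x ∈ ({a, b, d, m} : Set M), x ∈ span K {a, b, d, m} :=
      fun x hx => subset_span hx
    refine ⟨mem' _ (by simp), ?_, ?_, ?_⟩ <;>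
      repeat' (first | apply sub_mem | apply smul_mem | exact mem' _ (by simp))

section CircBlocks

variable {α R : Type*}

/-- The block matrix `[[U, V], [V, U]]`, with the block index as first coordinate. -/
def circBlocks (U V : Matrix α α R) : Matrix (Fin 2 × α) (Fin 2 × α) R :=
  of fun x y => if x.1 = y.1 then U x.2 y.2 else V x.2 y.2

theorem circBlocks_add [Add R] (U V U' V' : Matrix α α R) :
    circBlocks (U + U') (V + V') = circBlocks U V + circBlocks U' V' := by
  ext x y; by_cases h : x.1 = y.1 <;> simp [circBlocks, h]

theorem circBlocks_smul {S : Type*} [SMul S R] (c : S) (U V : Matrix α α R) :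
    circBlocks (c • U) (c • V) = c • circBlocks U V := by
  ext x y; by_cases h : x.1 = y.1 <;> simp [circBlocks, h]

theorem circBlocks_sub [Sub R] (U V U' V' : Matrix α α R) :
    circBlocks (U - U') (V - V') = circBlocks U V - circBlocks U' V' := by
  ext x y; by_cases h : x.1 = y.1 <;> simp [circBlocks, h]

theorem circBlocks_zero [Zero R] : circBlocks (0 : Matrix α α R) 0 = 0 := by
  ext; simp [circBlocks]

theorem circBlocks_one_zero [DecidableEq α] [Zero R] [One R] :
    circBlocks (1 : Matrix α α R) 0 = 1 := by
  ext ⟨e, x⟩ ⟨f, y⟩; by_cases h : e = f <;> simp [circBlocks, one_apply, h]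

theorem isSymm_circBlocks {U V : Matrix α α R} (hU : U.IsSymm) (hV : V.IsSymm) :
    (circBlocks U V).IsSymm := by
  ext ⟨e, x⟩ ⟨f, y⟩
  by_cases h : e = f
  · simp [circBlocks, h, hU.apply]
  · simp [circBlocks, h, Ne.symm h, hV.apply]

theorem circBlocks_mul [Fintype α] [NonUnitalNonAssocSemiring R] (U V U' V' : Matrix α α R) :
    circBlocks U V * circBlocks U' V' = circBlocks (U * U' + V * V') (U * V' + V * U') := by
  ext ⟨e, x⟩ ⟨f, y⟩
  fin_cases e <;> fin_cases f <;>
    simp [circBlocks, mul_apply, Fintype.sum_prod_type, Fin.sum_univ_two, add_comm]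

theorem circBlocks_eq_inv_two_smul {K : Type*} [Field K] [NeZero (2 : K)] (U V : Matrix α α K) :
    circBlocks U V = (2⁻¹ : K) •
      (circBlocks (U + V) ((1 : K) • (U + V)) + circBlocks (U - V) ((-1 : K) • (U - V))) := by
  ext x y
  by_cases h : x.1 = y.1 <;> simp [circBlocks, h] <;> field_simp <;> ring

theorem circBlocks_mem_of_mem_span [CommRing R] {S : Submodule R (Matrix (Fin 2 × α) (Fin 2 × α) R)}
    {s : Set (Matrix α α R)} (c : R) (hs : ∀ Z ∈ s, circBlocks Z (c • Z) ∈ S) {Z : Matrix α α R}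
    (hZ : Z ∈ span R s) : circBlocks Z (c • Z) ∈ S := by
  induction hZ using span_induction with
  | mem Z hZ => exact hs Z hZ
  | zero => simpa only [smul_zero, circBlocks_zero] using S.zero_mem
  | add Z Z' _ _ hZ hZ' => simpa [smul_add, circBlocks_add] using S.add_mem hZ hZ'
  | smul a Z _ hZ =>
    rw [smul_comm c a, circBlocks_smul]
    exact S.smul_mem a hZ

variable {K : Type*} [Field K] [NeZero (2 : K)] [Fintype α] [DecidableEq α]

theorem circBlocks_mul_mem {S : Submodule K (Matrix (Fin 2 × α) (Fin 2 × α) K)}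
    {s t : Set (Matrix α α K)}
    (hs : ∀ x ∈ s, ∀ y ∈ s, x * y ∈ span K s) (ht : ∀ x ∈ t, ∀ y ∈ t, x * y ∈ span K t)
    (hsS : ∀ Z ∈ s, circBlocks Z Z ∈ S) (htS : ∀ W ∈ t, circBlocks W (-W) ∈ S)
    {U V U' V' : Matrix α α K} (hUV : U + V ∈ span K s) (hUV' : U - V ∈ span K t)
    (hUV₂ : U' + V' ∈ span K s) (hUV₂' : U' - V' ∈ span K t) :
    circBlocks U V * circBlocks U' V' ∈ S := by
  rw [circBlocks_mul, circBlocks_eq_inv_two_smul]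
  refine S.smul_mem _ (S.add_mem ?_ ?_)
  · refine circBlocks_mem_of_mem_span 1 (fun Z hZ => by simpa using hsS Z hZ) ?_
    have : U * U' + V * V' + (U * V' + V * U') = (U + V) * (U' + V') := by noncomm_ring
    exact this ▸ mul_mem_span_of_mul_mem_span hs hUV hUV₂
  · refine circBlocks_mem_of_mem_span (-1) (fun W hW => by simpa using htS W hW) ?_
    have : U * U' + V * V' - (U * V' + V * U') = (U - V) * (U' - V') := by noncomm_ring
    exact this ▸ mul_mem_span_of_mul_mem_span ht hUV' hUV₂'

end CircBlocks

section DoubleCover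

variable {X K : Type*} [Field K]

/-- The algebraic axioms of a symmetric association scheme; `0/1` entries are not required. -/
structure IsSymmetricScheme [Fintype X] [DecidableEq X] {d : ℕ} (T : Fin (d + 1) → Matrix X X K) :
    Prop where
  zero_eq_one : T 0 = 1
  isSymm : ∀ i, (T i).IsSymm
  sum_eq_ones : ∑ i, T i = ones X K
  mul_eq_sum : ∃ c : Fin (d + 1) → Fin (d + 1) → Fin (d + 1) → K,
    ∀ i j, T i * T j = ∑ k, c i j k • T k

/-- `doubleCover A₀ A₁ A₂ A₃ A₄ A₅ i` is the matrix `Ã_i` of the paper. -/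
def doubleCover (A₀ A₁ A₂ A₃ A₄ A₅ : Matrix X X K) : Fin 9 → Matrix (Fin 2 × X) (Fin 2 × X) K :=
  fun i => circBlocks (![A₀, A₁, 0, A₂, A₃, 0, A₄, A₅, 0] i) (![0, 0, A₁, A₂, 0, A₃, A₅, A₄, A₀] i)

variable {A₀ A₁ A₂ A₃ A₄ A₅ : Matrix X X K}

theorem circBlocks_self_mem_span_doubleCover {Z : Matrix X X K}
    (hZ : Z ∈ span K {A₀, A₁, A₂, A₃, A₄ + A₅}) :
    circBlocks Z Z ∈ span K (Set.range (doubleCover A₀ A₁ A₂ A₃ A₄ A₅)) := by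
  have memT : ∀ i, _ ∈ span K (Set.range (doubleCover A₀ A₁ A₂ A₃ A₄ A₅)) :=
    fun i => subset_span (Set.mem_range_self i)
  simpa using circBlocks_mem_of_mem_span 1 (by
    simp only [Set.mem_insert_iff, Set.mem_singleton_iff, one_smul]
    rintro Z (rfl | rfl | rfl | rfl | rfl)
    · simpa [doubleCover, ← circBlocks_add] using add_mem (memT 0) (memT 8)
    · simpa [doubleCover, ← circBlocks_add] using add_mem (memT 1) (memT 2)
    · simpa [doubleCover] using memT 3
    · simpa [doubleCover, ← circBlocks_add] using add_mem (memT 4) (memT 5)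
    · simpa [doubleCover, ← circBlocks_add, add_comm A₅] using add_mem (memT 6) (memT 7)) hZ

theorem circBlocks_neg_mem_span_doubleCover {W : Matrix X X K}
    (hW : W ∈ span K {A₀, A₁, A₃, A₄ - A₅}) :
    circBlocks W (-W) ∈ span K (Set.range (doubleCover A₀ A₁ A₂ A₃ A₄ A₅)) := by
  have memT : ∀ i, _ ∈ span K (Set.range (doubleCover A₀ A₁ A₂ A₃ A₄ A₅)) :=
    fun i => subset_span (Set.mem_range_self i)
  simpa using circBlocks_mem_of_mem_span (-1) (by
    simp only [Set.mem_insert_iff, Set.mem_singleton_iff, neg_one_smul]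
    rintro W (rfl | rfl | rfl | rfl)
    · simpa [doubleCover, ← circBlocks_sub] using sub_mem (memT 0) (memT 8)
    · simpa [doubleCover, ← circBlocks_sub] using sub_mem (memT 1) (memT 2)
    · simpa [doubleCover, ← circBlocks_sub] using sub_mem (memT 4) (memT 5)
    · simpa [doubleCover, ← circBlocks_sub] using sub_mem (memT 6) (memT 7)) hW

theorem exists_doubleCover_eq_circBlocks (i : Fin 9) :
    ∃ U V, doubleCover A₀ A₁ A₂ A₃ A₄ A₅ i = circBlocks U V ∧
      U + V ∈ span K {A₀, A₁, A₂, A₃, A₄ + A₅} ∧ U - V ∈ span K {A₀, A₁, A₃, A₄ - A₅} := by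
  fin_cases i <;> refine ⟨_, _, rfl, ?_, ?_⟩ <;>
    simp only [Fin.zero_eta, Fin.mk_one, Fin.reduceFinMk, Matrix.cons_val, add_zero, zero_add,
      sub_zero, zero_sub, sub_self, add_comm A₅ A₄, ← neg_sub A₄ A₅] <;>
    first
    | exact zero_mem _
    | (apply subset_span; simp; done)
    | (apply neg_mem; apply subset_span; simp)
    | (apply add_mem <;> apply subset_span <;> simp)

variable [Fintype X] [DecidableEq X] [NeZero (2 : K)]

theorem doubleCover_mul_mem_span {s t : Set (Matrix X X K)}
    (hs : ∀ x ∈ s, ∀ y ∈ s, x * y ∈ span K s) (ht : ∀ x ∈ t, ∀ y ∈ t, x * y ∈ span K t)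
    (hsA : span K s = span K {A₀, A₁, A₂, A₃, A₄ + A₅})
    (htA : span K t = span K {A₀, A₁, A₃, A₄ - A₅}) (i j : Fin 9) :
    doubleCover A₀ A₁ A₂ A₃ A₄ A₅ i * doubleCover A₀ A₁ A₂ A₃ A₄ A₅ j ∈
      span K (Set.range (doubleCover A₀ A₁ A₂ A₃ A₄ A₅)) := by
  obtain ⟨U, V, hi, hUV, hUV'⟩ := exists_doubleCover_eq_circBlocks (A₃ := A₃) i
  obtain ⟨U', V', hj, hUV₂, hUV₂'⟩ := exists_doubleCover_eq_circBlocks (A₃ := A₃) j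
  rw [hi, hj]
  refine circBlocks_mul_mem hs ht
    (fun Z hZ => circBlocks_self_mem_span_doubleCover (hsA ▸ subset_span hZ))
    (fun W hW => circBlocks_neg_mem_span_doubleCover (htA ▸ subset_span hW))
    (hsA ▸ hUV) (htA ▸ hUV') (hsA ▸ hUV₂) (htA ▸ hUV₂')

theorem isSymmetricScheme_doubleCover {s t : Set (Matrix X X K)}
    (h₀ : A₀ = 1) (h₁ : A₁.IsSymm) (h₂ : A₂.IsSymm) (h₃ : A₃.IsSymm) (h₄ : A₄.IsSymm)
    (h₅ : A₅.IsSymm) (hsum : A₀ + A₁ + A₂ + A₃ + A₄ + A₅ = ones X K)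
    (hs : ∀ x ∈ s, ∀ y ∈ s, x * y ∈ span K s) (ht : ∀ x ∈ t, ∀ y ∈ t, x * y ∈ span K t)
    (hsA : span K s = span K {A₀, A₁, A₂, A₃, A₄ + A₅})
    (htA : span K t = span K {A₀, A₁, A₃, A₄ - A₅}) :
    IsSymmetricScheme (doubleCover A₀ A₁ A₂ A₃ A₄ A₅) := by
  refine ⟨by simp [doubleCover, h₀, circBlocks_one_zero], fun i => ?_, ?_, ?_⟩
  · fin_cases i <;> apply isSymm_circBlocks <;>
      simp [h₀, h₁, h₂, h₃, h₄, h₅, isSymm_zero, isSymm_one]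
  · ext ⟨e, x⟩ ⟨f, y⟩
    have hxy := congrFun (congrFun hsum x) y
    simp only [Matrix.add_apply, ones_apply] at hxy
    by_cases h : e = f <;> simp [doubleCover, circBlocks, Fin.sum_univ_succ, h] <;>
      linear_combination hxy
  · choose c hc using fun i j =>
      (mem_span_range_iff_exists_fun K).mp (doubleCover_mul_mem_span hs ht hsA htA i j)
    exact ⟨c, fun i j => (hc i j).symm⟩

end DoubleCover

section BlockAlgebra

variable (ι β γ K : Type*) [Fintype ι] [DecidableEq ι] [Fintype β] [DecidableEq β]
  [Fintype γ] [DecidableEq γ] [CommRing K]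

def blockGens : Set (Matrix (ι × β × γ) (ι × β × γ) K) :=
  {1, 1 ⊗ₖ (1 ⊗ₖ ones γ K), 1 ⊗ₖ (ones β K ⊗ₖ ones γ K), ones ι K ⊗ₖ (1 ⊗ₖ ones γ K),
    ones ι K ⊗ₖ (ones β K ⊗ₖ ones γ K)}

variable {ι β γ K}

theorem mul_mem_span_blockGens :
    ∀ x ∈ blockGens ι β γ K, ∀ y ∈ blockGens ι β γ K, x * y ∈ span K (blockGens ι β γ K) := by
  simp only [blockGens, Set.mem_insert_iff, Set.mem_singleton_iff]
  rintro x (rfl | rfl | rfl | rfl | rfl) y (rfl | rfl | rfl | rfl | rfl) <;>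
    simp only [one_mul, mul_one, ← mul_kronecker_mul, ones_mul_ones, smul_kronecker,
      kronecker_smul, smul_smul] <;>
    first
    | (apply subset_span; simp; done)
    | (refine smul_mem _ _ (subset_span ?_); simp)

end BlockAlgebra

theorem of_rel₁_eq {ι β γ K : Type*} [DecidableEq ι] [DecidableEq β] [DecidableEq γ] [Ring K] :
    (of fun x y : ι × β × γ => if x.1 = y.1 ∧ x.2.1 = y.2.1 ∧ x.2.2 ≠ y.2.2 then (1 : K) else 0) =
      1 ⊗ₖ (1 ⊗ₖ ones γ K) - 1 := by
  ext ⟨i, a, b⟩ ⟨j, c, d⟩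
  by_cases h₁ : i = j <;> by_cases h₂ : a = c <;> by_cases h₃ : b = d <;>
    simp [one_apply, h₁, h₂, h₃]

theorem of_rel₂_eq {ι β γ K : Type*} [DecidableEq ι] [DecidableEq β] [Ring K] :
    (of fun x y : ι × β × γ => if x.1 = y.1 ∧ x.2.1 ≠ y.2.1 then (1 : K) else 0) =
      1 ⊗ₖ (ones β K ⊗ₖ ones γ K) - 1 ⊗ₖ (1 ⊗ₖ ones γ K) := by
  ext ⟨i, a, b⟩ ⟨j, c, d⟩
  by_cases h₁ : i = j <;> by_cases h₂ : a = c <;> simp [one_apply, h₁, h₂]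

theorem of_rel₃_eq {ι β γ K : Type*} [DecidableEq ι] [DecidableEq β] [Ring K] :
    (of fun x y : ι × β × γ => if x.1 ≠ y.1 ∧ x.2.1 = y.2.1 then (1 : K) else 0) =
      ones ι K ⊗ₖ (1 ⊗ₖ ones γ K) - 1 ⊗ₖ (1 ⊗ₖ ones γ K) := by
  ext ⟨i, a, b⟩ ⟨j, c, d⟩
  by_cases h₁ : i = j <;> by_cases h₂ : a = c <;> simp [one_apply, h₁, h₂]

theorem transpose_mul_eq_of_mul_eq {Y R : Type*} [Fintype Y] [DecidableEq Y] [CommRing R]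
    {G E : Matrix Y Y R} (hG : G * Gᵀ = 1) (hGE : G * E = E) : Gᵀ * E = E := by
  rw [← hGE, ← Matrix.mul_assoc, mul_eq_one_comm.mp hG, Matrix.one_mul, hGE]

section BlockGram

variable {ι Y R : Type*} [Fintype Y] [CommRing R]

def blockGram (G : ι → Matrix Y Y R) : Matrix (ι × Y) (ι × Y) R :=
  of fun x y => (G x.1 * (G y.1)ᵀ) x.2 y.2

variable {G : ι → Matrix Y Y R}

theorem isSymm_blockGram : (blockGram G).IsSymm := by
  ext x y
  simp only [blockGram, transpose_apply, of_apply]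
  rw [← transpose_apply (G x.1 * _), transpose_mul, transpose_transpose]

variable [Fintype ι]

theorem blockGram_mul_kronecker_apply (X : Matrix ι ι R) (E : Matrix Y Y R) (i j : ι) (p q : Y) :
    (blockGram G * (X ⊗ₖ E)) (i, p) (j, q) = ∑ k, X k j * (G i * (G k)ᵀ * E) p q := by
  simp only [mul_apply, Fintype.sum_prod_type, blockGram, of_apply, kronecker_apply, Finset.mul_sum]
  exact Finset.sum_congr rfl fun k _ => Finset.sum_congr rfl fun r _ => by ring

variable [DecidableEq Y] (hG : ∀ i, G i * (G i)ᵀ = 1)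
include hG

theorem blockGram_mul_self : blockGram G * blockGram G = (Fintype.card ι : R) • blockGram G := by
  ext ⟨i, p⟩ ⟨j, q⟩
  have h : ∀ k, ∑ r, blockGram G (i, p) (k, r) * blockGram G (k, r) (j, q) =
      blockGram G (i, p) (j, q) := fun k => by
    simp only [blockGram, of_apply]
    rw [← mul_apply, Matrix.mul_assoc, ← Matrix.mul_assoc (G k)ᵀ, mul_eq_one_comm.mp (hG k),
      Matrix.one_mul]
  simp [mul_apply, Fintype.sum_prod_type, h]

variable {E : Matrix Y Y R} (hGE : ∀ i, G i * E = E)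
include hGE

theorem blockGram_mul_ones_kronecker :
    blockGram G * (ones ι R ⊗ₖ E) = (Fintype.card ι : R) • (ones ι R ⊗ₖ E) := by
  ext ⟨i, p⟩ ⟨j, q⟩
  rw [blockGram_mul_kronecker_apply]
  simp [Matrix.mul_assoc, transpose_mul_eq_of_mul_eq (hG _) (hGE _), hGE]

theorem ones_kronecker_mul_blockGram (hE : E.IsSymm) :
    (ones ι R ⊗ₖ E) * blockGram G = (Fintype.card ι : R) • (ones ι R ⊗ₖ E) := by
  rw [← (isSymm_ones.kronecker hE).eq, ← isSymm_blockGram.eq, ← transpose_mul,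
    blockGram_mul_ones_kronecker hG hGE, transpose_smul, (isSymm_ones.kronecker hE).eq]

variable [DecidableEq ι]

theorem blockGram_mul_one_kronecker : blockGram G * (1 ⊗ₖ E) = ones ι R ⊗ₖ E := by
  ext ⟨i, p⟩ ⟨j, q⟩
  rw [blockGram_mul_kronecker_apply]
  simp [one_apply, Matrix.mul_assoc, transpose_mul_eq_of_mul_eq (hG _) (hGE _), hGE]

theorem one_kronecker_mul_blockGram (hE : E.IsSymm) : (1 ⊗ₖ E) * blockGram G = ones ι R ⊗ₖ E := by
  rw [← (isSymm_one.kronecker hE).eq, ← isSymm_blockGram.eq, ← transpose_mul,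
    blockGram_mul_one_kronecker hG hGE, (isSymm_ones.kronecker hE).eq]

end BlockGram

section GramAlgebra

variable {ι β γ K : Type*} [Fintype ι] [DecidableEq ι] [Fintype β] [DecidableEq β]
  [Fintype γ] [DecidableEq γ] [CommRing K]

def gramGens (G : ι → Matrix (β × γ) (β × γ) K) : Set (Matrix (ι × β × γ) (ι × β × γ) K) :=
  {1, 1 ⊗ₖ (1 ⊗ₖ ones γ K), ones ι K ⊗ₖ (1 ⊗ₖ ones γ K), blockGram G}

theorem mul_mem_span_gramGens {G : ι → Matrix (β × γ) (β × γ) K}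
    (hG : ∀ i, G i * (G i)ᵀ = 1) (hGE : ∀ i, G i * (1 ⊗ₖ ones γ K) = 1 ⊗ₖ ones γ K) :
    ∀ x ∈ gramGens G, ∀ y ∈ gramGens G, x * y ∈ span K (gramGens G) := by
  have hE : (1 ⊗ₖ ones γ K : Matrix (β × γ) (β × γ) K).IsSymm := isSymm_one.kronecker isSymm_ones
  simp only [gramGens, Set.mem_insert_iff, Set.mem_singleton_iff]
  rintro x (rfl | rfl | rfl | rfl) y (rfl | rfl | rfl | rfl) <;>
    simp only [one_mul, mul_one, ← mul_kronecker_mul, ones_mul_ones, smul_kronecker,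
      kronecker_smul, smul_smul, blockGram_mul_self hG, blockGram_mul_one_kronecker hG hGE,
      blockGram_mul_ones_kronecker hG hGE, one_kronecker_mul_blockGram hG hGE hE,
      ones_kronecker_mul_blockGram hG hGE hE] <;>
    first
    | (apply subset_span; simp; done)
    | (refine smul_mem _ _ (subset_span ?_); simp)

end GramAlgebra

section MUBHCover

variable {ι β γ K : Type*} [Fintype ι] [DecidableEq ι] [Fintype β] [DecidableEq β]
  [Fintype γ] [DecidableEq γ] [Field K] [NeZero (2 : K)]

theorem isSymmetricScheme_doubleCover_of_blockGram {G : ι → Matrix (β × γ) (β × γ) K}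
    (hG : ∀ i, G i * (G i)ᵀ = 1) (hGE : ∀ i, G i * (1 ⊗ₖ ones γ K) = 1 ⊗ₖ ones γ K)
    {c : K} (hc : c ≠ 0) {A₀ A₁ A₂ A₃ A₄ A₅ : Matrix (ι × β × γ) (ι × β × γ) K}
    (h₀ : A₀ = 1) (h₁ : A₁ = 1 ⊗ₖ (1 ⊗ₖ ones γ K) - 1)
    (h₂ : A₂ = 1 ⊗ₖ (ones β K ⊗ₖ ones γ K) - 1 ⊗ₖ (1 ⊗ₖ ones γ K))
    (h₃ : A₃ = ones ι K ⊗ₖ (1 ⊗ₖ ones γ K) - 1 ⊗ₖ (1 ⊗ₖ ones γ K))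
    (h₄₅ : A₄ + A₅ = ones (ι × β × γ) K - 1 ⊗ₖ ones (β × γ) K - A₃)
    (h₄₅' : A₄ - A₅ = c • (blockGram G - 1) - A₃) :
    IsSymmetricScheme (doubleCover A₀ A₁ A₂ A₃ A₄ A₅) := by
  simp only [← ones_kronecker_ones] at h₄₅
  have hE : (1 ⊗ₖ ones γ K : Matrix (β × γ) (β × γ) K).IsSymm := isSymm_one.kronecker isSymm_ones
  have hE' : (ones β K ⊗ₖ ones γ K).IsSymm := isSymm_ones.kronecker isSymm_ones
  have hsymm₃ : A₃.IsSymm := h₃ ▸ (isSymm_ones.kronecker hE).sub (isSymm_one.kronecker hE)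
  have hsymm₄₅ : (A₄ + A₅).IsSymm :=
    h₄₅ ▸ ((isSymm_ones.kronecker hE').sub (isSymm_one.kronecker hE')).sub hsymm₃
  have hsymm₄₅' : (A₄ - A₅).IsSymm :=
    h₄₅' ▸ ((isSymm_blockGram.sub isSymm_one).smul c).sub hsymm₃
  refine isSymmetricScheme_doubleCover (s := blockGens ι β γ K) (t := gramGens G) h₀
    (h₁ ▸ (isSymm_one.kronecker hE).sub isSymm_one)
    (h₂ ▸ (isSymm_one.kronecker hE').sub (isSymm_one.kronecker hE)) hsymm₃
    (isSymm_of_isSymm_add_of_isSymm_sub hsymm₄₅ hsymm₄₅')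
    (isSymm_of_isSymm_add_of_isSymm_sub (add_comm A₄ A₅ ▸ hsymm₄₅) (neg_sub A₄ A₅ ▸ hsymm₄₅'.neg))
    ?_ mul_mem_span_blockGens (mul_mem_span_gramGens hG hGE) ?_ ?_
  · rw [add_assoc _ A₄, h₄₅, h₀, h₁, h₂, ones_kronecker_ones, ones_kronecker_ones]
    abel
  · rw [h₄₅, h₀, h₁, h₂, h₃]
    exact span_five_eq_span_sub _ _ _ _ _
  · rw [h₄₅', h₀, h₁, h₃]
    exact span_four_eq_span_sub _ _ _ _ hc

end MUBHCover

theorem mul_one_kronecker_ones_of_isBushType {n : ℕ}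
    {H : Matrix (Fin (2 * n) × Fin (2 * n)) (Fin (2 * n) × Fin (2 * n)) ℝ} (hH : isBushType n H) :
    H * (1 ⊗ₖ ones (Fin (2 * n)) ℝ) = (2 * n : ℝ) • (1 ⊗ₖ ones (Fin (2 * n)) ℝ) := by
  ext p ⟨c, d⟩
  simp only [mul_apply, Fintype.sum_prod_type, kronecker_apply, one_apply, ones_apply, mul_one,
    mul_ite, mul_zero, Matrix.smul_apply, smul_eq_mul]
  by_cases h : p.1 = c
  · subst h
    simp [hH.1]
  · simp [h, (hH.2 p.1 c h).1 p.2]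

section NormalizedFamily

variable {n m : ℕ} (hn : 0 < n)
  {H : Fin m → Matrix (Fin (2 * n) × Fin (2 * n)) (Fin (2 * n) × Fin (2 * n)) ℝ}
  {G : Fin (m + 1) → Matrix (Fin (2 * n) × Fin (2 * n)) (Fin (2 * n) × Fin (2 * n)) ℝ}
  (hG0 : G 0 = 1) (hGs : ∀ k : Fin m, G k.succ = (2 * (n : ℝ))⁻¹ • H k)
include hn hG0 hGs

theorem normalized_mul_transpose (hHad : ∀ k, H k * (H k)ᵀ = ((4 * n ^ 2 : ℕ) : ℝ) • 1)
    (i : Fin (m + 1)) : G i * (G i)ᵀ = 1 := by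
  induction i using Fin.cases with
  | zero => simp [hG0]
  | succ k =>
    have hc : (2 * (n : ℝ))⁻¹ * (2 * (n : ℝ))⁻¹ * ((4 * n ^ 2 : ℕ) : ℝ) = 1 := by
      push_cast
      field_simp
      ring
    rw [hGs, transpose_smul, Matrix.smul_mul, Matrix.mul_smul, hHad, smul_smul, smul_smul, hc,
      one_smul]

theorem normalized_mul_one_kronecker_ones (hBush : ∀ k, isBushType n (H k)) (i : Fin (m + 1)) :
    G i * (1 ⊗ₖ ones (Fin (2 * n)) ℝ) = 1 ⊗ₖ ones (Fin (2 * n)) ℝ := by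
  induction i using Fin.cases with
  | zero => simp [hG0]
  | succ k =>
    rw [hGs, Matrix.smul_mul, mul_one_kronecker_ones_of_isBushType (hBush k), smul_smul,
      inv_mul_cancel₀ (by positivity), one_smul]

theorem normalized_mul_transpose_of_ne (hsign : ∀ k, signMatrix (H k))
    (hmub : ∀ k l, k ≠ l → ∃ L, signMatrix L ∧ H k * (H l)ᵀ = (2 * (n : ℝ)) • L)
    {i j : Fin (m + 1)} (hij : i ≠ j) :
    ∃ L, signMatrix L ∧ G i * (G j)ᵀ = (2 * (n : ℝ))⁻¹ • L := by
  induction i using Fin.cases with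
  | zero =>
    induction j using Fin.cases with
    | zero => exact absurd rfl hij
    | succ l => exact ⟨(H l)ᵀ, fun p q => hsign l q p, by simp [hG0, hGs]⟩
  | succ k =>
    induction j using Fin.cases with
    | zero => exact ⟨H k, hsign k, by simp [hG0, hGs]⟩
    | succ l =>
      obtain ⟨L, hL, hkl⟩ := hmub k l fun h => hij (congrArg Fin.succ h)
      refine ⟨L, hL, ?_⟩
      rw [hGs, hGs, transpose_smul, Matrix.smul_mul, Matrix.mul_smul, hkl, smul_smul, smul_smul]
      congr 1
      field_simp

end NormalizedFamily

theorem add_eq_abs_sub_of_zero_or_one {R : Type*} [Ring R] [LinearOrder R] [IsOrderedRing R]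
    {a b : R} (ha : a = 0 ∨ a = 1) (hb : b = 0 ∨ b = 1) (hab : a = 0 ∨ b = 0) :
    a + b = |a - b| := by
  rcases ha with rfl | rfl <;> rcases hb with rfl | rfl <;> simp_all

theorem add_eq_ones_sub_of_sub_eq_smul_blockGram {ι Y : Type*} [Fintype ι] [DecidableEq ι]
    [Fintype Y] [DecidableEq Y] {c : ℝ} (hc : c ≠ 0) {G : ι → Matrix Y Y ℝ}
    (hG : ∀ i, G i * (G i)ᵀ = 1)
    (hGG : ∀ i j, i ≠ j → ∃ L, signMatrix L ∧ G i * (G j)ᵀ = c⁻¹ • L)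
    {B₁ B₂ : Matrix (ι × Y) (ι × Y) ℝ} (hB₁ : ∀ x y, B₁ x y = 0 ∨ B₁ x y = 1)
    (hB₂ : ∀ x y, B₂ x y = 0 ∨ B₂ x y = 1) (hdisj : ∀ x y, B₁ x y = 0 ∨ B₂ x y = 0)
    (hB : B₁ - B₂ = c • (blockGram G - 1)) :
    B₁ + B₂ = ones (ι × Y) ℝ - 1 ⊗ₖ ones Y ℝ := by
  ext ⟨i, p⟩ ⟨j, q⟩
  rw [Matrix.add_apply, add_eq_abs_sub_of_zero_or_one (hB₁ _ _) (hB₂ _ _) (hdisj _ _),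
    ← Matrix.sub_apply, hB]
  by_cases hij : i = j
  · subst hij
    simp [blockGram, hG, one_apply]
  · obtain ⟨L, hL, hGL⟩ := hGG i j hij
    rcases hL p q with h | h <;> simp [blockGram, hGL, one_apply, hij, h, hc]

end MUBHScheme

open MUBHScheme Kronecker

/-- The double cover `Ã₀, …, Ã₈` of the 5-class scheme of mutually unbiased
Bush-type Hadamard matrices forms a symmetric 8-class association scheme. -/
theorem mubh_eight_class_scheme (n m : ℕ) (hn : 0 < n)
    (H : Fin m → Matrix (Fin (2*n) × Fin (2*n)) (Fin (2*n) × Fin (2*n)) ℝ)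
    (hsign : ∀ k, signMatrix (H k))
    (hHad : ∀ k, H k * (H k)ᵀ = ((4 * n ^ 2 : ℕ) : ℝ) • 1)
    (hBush : ∀ k, isBushType n (H k))
    (hmub : ∀ k l, k ≠ l → ∃ L, signMatrix L ∧ H k * (H l)ᵀ = (2 * (n : ℝ)) • L)
    (G : Fin (m+1) → Matrix (Fin (2*n) × Fin (2*n)) (Fin (2*n) × Fin (2*n)) ℝ)
    (hG0 : G 0 = 1)
    (hGs : ∀ k : Fin m, G k.succ = (2 * (n : ℝ))⁻¹ • H k)
    (M : Matrix (Fin (m+1) × Fin (2*n) × Fin (2*n)) (Fin (m+1) × Fin (2*n) × Fin (2*n)) ℝ)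
    (hM : ∀ i j p q, M (i, p) (j, q) = (G i * (G j)ᵀ) p q)
    (B₁ B₂ : Matrix (Fin (m+1) × Fin (2*n) × Fin (2*n)) (Fin (m+1) × Fin (2*n) × Fin (2*n)) ℝ)
    (hB₁01 : ∀ x y, B₁ x y = 0 ∨ B₁ x y = 1)
    (hB₂01 : ∀ x y, B₂ x y = 0 ∨ B₂ x y = 1)
    (hdisj : ∀ x y, B₁ x y = 0 ∨ B₂ x y = 0)
    (hB : B₁ - B₂ = (2 * (n : ℝ)) • (M - 1))
    (A₀ A₁ A₂ A₃ A₄ A₅ : Matrix (Fin (m+1) × Fin (2*n) × Fin (2*n)) (Fin (m+1) × Fin (2*n) × Fin (2*n)) ℝ)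
    (hA₀ : A₀ = 1)
    (hA₁ : A₁ = Matrix.of (fun x y : Fin (m+1) × Fin (2*n) × Fin (2*n) =>
      if x.1 = y.1 ∧ x.2.1 = y.2.1 ∧ x.2.2 ≠ y.2.2 then (1 : ℝ) else 0))
    (hA₂ : A₂ = Matrix.of (fun x y : Fin (m+1) × Fin (2*n) × Fin (2*n) =>
      if x.1 = y.1 ∧ x.2.1 ≠ y.2.1 then (1 : ℝ) else 0))
    (hA₃ : A₃ = Matrix.of (fun x y : Fin (m+1) × Fin (2*n) × Fin (2*n) =>
      if x.1 ≠ y.1 ∧ x.2.1 = y.2.1 then (1 : ℝ) else 0))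
    (hA₄ : A₄ = B₁ - A₃)
    (hA₅ : A₅ = B₂)
    (T : Fin 9 → Matrix (Fin 2 × Fin (m+1) × Fin (2*n) × Fin (2*n)) (Fin 2 × Fin (m+1) × Fin (2*n) × Fin (2*n)) ℝ)
    (hT0 : ∀ e f x y, T 0 (e, x) (f, y) = if e = f then A₀ x y else 0)
    (hT1 : ∀ e f x y, T 1 (e, x) (f, y) = if e = f then A₁ x y else 0)
    (hT2 : ∀ e f x y, T 2 (e, x) (f, y) = if e = f then 0 else A₁ x y)
    (hT3 : ∀ e f x y, T 3 (e, x) (f, y) = A₂ x y)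
    (hT4 : ∀ e f x y, T 4 (e, x) (f, y) = if e = f then A₃ x y else 0)
    (hT5 : ∀ e f x y, T 5 (e, x) (f, y) = if e = f then 0 else A₃ x y)
    (hT6 : ∀ e f x y, T 6 (e, x) (f, y) = if e = f then A₄ x y else A₅ x y)
    (hT7 : ∀ e f x y, T 7 (e, x) (f, y) = if e = f then A₅ x y else A₄ x y)
    (hT8 : ∀ e f x y, T 8 (e, x) (f, y) = if e = f then 0 else A₀ x y)
    :
    T 0 = 1 ∧
    (∀ i, (T i)ᵀ = T i) ∧
    (∑ i, T i = Matrix.of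
      (fun _ _ : Fin 2 × Fin (m+1) × Fin (2*n) × Fin (2*n) => (1 : ℝ))) ∧
    (∃ c : Fin 9 → Fin 9 → Fin 9 → ℝ, ∀ i j,
      T i * T j = ∑ k, c i j k • T k) := by
  have hG := normalized_mul_transpose hn hG0 hGs hHad
  have hGE := normalized_mul_one_kronecker_ones hn hG0 hGs hBush
  have hMG : M = blockGram G := by
    ext ⟨i, p⟩ ⟨j, q⟩
    exact hM i j p q
  have hB₁₂ : B₁ + B₂ = ones _ ℝ - 1 ⊗ₖ ones _ ℝ :=
    add_eq_ones_sub_of_sub_eq_smul_blockGram (by positivity) hG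
      (fun i j hij => normalized_mul_transpose_of_ne hn hG0 hGs hsign hmub hij)
      hB₁01 hB₂01 hdisj (hMG ▸ hB)
  have hT : T = doubleCover A₀ A₁ A₂ A₃ A₄ A₅ := by
    funext i
    ext ⟨e, x⟩ ⟨f, y⟩
    fin_cases i <;>
      simp only [Fin.zero_eta, Fin.mk_one, Fin.reduceFinMk, doubleCover, circBlocks, of_apply,
        Matrix.cons_val, Matrix.zero_apply, ite_self, hT0, hT1, hT2, hT3, hT4, hT5, hT6, hT7, hT8]
  have hscheme := isSymmetricScheme_doubleCover_of_blockGram hG hGE (c := 2 * (n : ℝ))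
    (A₄ := A₄) (A₅ := A₅) (by positivity) hA₀ (hA₁.trans of_rel₁_eq) (hA₂.trans of_rel₂_eq)
    (hA₃.trans of_rel₃_eq) ?_ ?_
  · rw [hT]
    exact ⟨hscheme.zero_eq_one, hscheme.isSymm, hscheme.sum_eq_ones, hscheme.mul_eq_sum⟩
  · rw [hA₄, hA₅, ← hB₁₂]
    abel
  · rw [hA₄, hA₅, ← hMG, ← hB]
    abel
end

section
/- Suppose A₀,…,A₅ are (0,1)-matrices forming an association scheme whose eigenmatrices equal those of the 5-class MUBH scheme with parameters n, m. Setting G = A₀ + (1/2n)A₃ + (1/2n)A₄ − (1/2n)A₅, one has G² = (m+1)·G. -/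
open Matrix BigOperators

/-- The first eigenmatrix `P` of the 5-class scheme of mutually unbiased
Bush-type Hadamard matrices of order `4n²` (Remark 1(2) of the paper). -/
def eigP (n m : ℕ) : Matrix (Fin 6) (Fin 6) ℝ :=
  !![1, 2*n - 1, 2*n*(2*n - 1), 2*n*m, n*(2*n - 1)*m, n*(2*n - 1)*m;
     1, -1, 0, 0, n*m, -(n*m);
     1, 2*n - 1, -(2*n), 2*n*m, -(n*m), -(n*m);
     1, 2*n - 1, -(2*n), -(2*n), n, n;
     1, -1, 0, 0, -n, n;
     1, 2*n - 1, 2*n*(2*n - 1), -(2*n), -(n*(2*n - 1)), -(n*(2*n - 1))]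

/-! Expanding `A j = ∑ i, P i j • E i`, the coefficient of `E i` in `G = ∑ j, c j • A j` is
`(P *ᵥ c) i`; for `c = (1, 0, 0, 1/2n, 1/2n, -1/2n)` this vector is `(m+1, m+1, m+1, 0, 0, 0)`.
Hence `G = (m+1) • (E 0 + E 1 + E 2)` is `m+1` times a sum of orthogonal idempotents. -/

lemma sum_smul_eq_sum_mulVec_smul {ι κ R M : Type*} [Fintype ι] [Fintype κ] [CommSemiring R]
    [AddCommMonoid M] [Module R M] (P : Matrix ι κ R) {E : ι → M} {A : κ → M}
    (hA : ∀ j, A j = ∑ i, P i j • E i) (c : κ → R) :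
    ∑ j, c j • A j = ∑ i, (P *ᵥ c) i • E i := by
  simp only [hA, Finset.smul_sum, smul_smul, mulVec, dotProduct, Finset.sum_smul]
  rw [Finset.sum_comm]
  simp_rw [mul_comm]

lemma IsIdempotentElem.smul_mul_smul_self {R A : Type*} [CommSemiring R] [Semiring A] [Module R A]
    [IsScalarTower R A A] [SMulCommClass R A A] {e : A} (he : IsIdempotentElem e) (c : R) :
    (c • e) * (c • e) = c • (c • e) := by
  rw [smul_mul_smul_comm, he.eq, mul_smul]

lemma eigP_mulVec_G_coeffs (n m : ℕ) (hn : n ≠ 0) :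
    eigP n m *ᵥ ![1, 0, 0, (2 * (n : ℝ))⁻¹, (2 * (n : ℝ))⁻¹, -(2 * (n : ℝ))⁻¹] =
      ![(m : ℝ) + 1, (m : ℝ) + 1, (m : ℝ) + 1, 0, 0, 0] := by
  ext i
  fin_cases i <;>
    simp only [mulVec, dotProduct, Fin.sum_univ_six, eigP, of_apply, Fin.zero_eta, Fin.mk_one,
      Fin.reduceFinMk, Fin.isValue, cons_val', cons_val, cons_val_zero, cons_val_one,
      cons_val_fin_one] <;>
    field_simp <;> ring

lemma mubh_G_eq_smul_sum_E {M : Type*} [AddCommGroup M] [Module ℝ M] (n m : ℕ) (hn : n ≠ 0)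
    {A E : Fin 6 → M} (hAE : ∀ j, A j = ∑ i, eigP n m i j • E i) :
    A 0 + (2 * (n : ℝ))⁻¹ • (A 3 + A 4 - A 5) = ((m : ℝ) + 1) • (E 0 + E 1 + E 2) := by
  have h := sum_smul_eq_sum_mulVec_smul _ hAE
    ![1, 0, 0, (2 * (n : ℝ))⁻¹, (2 * (n : ℝ))⁻¹, -(2 * (n : ℝ))⁻¹]
  rw [eigP_mulVec_G_coeffs n m hn] at h
  simp only [Fin.sum_univ_six, cons_val_zero, cons_val_one, cons_val, one_smul, zero_smul,
    add_zero, neg_smul] at h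
  convert h using 1 <;> module

theorem scheme_G_idempotent_general (n m : ℕ) (hn : 0 < n)
    (A : Fin 6 → Matrix (Fin ((m+1) * (4*n^2))) (Fin ((m+1) * (4*n^2))) ℝ)
    (E : Fin 6 → Matrix (Fin ((m+1) * (4*n^2))) (Fin ((m+1) * (4*n^2))) ℝ)
    (hidem : ∀ i, E i * E i = E i)
    (horth : ∀ i j, i ≠ j → E i * E j = 0)
    (hAE : ∀ j, A j = ∑ i, eigP n m i j • E i) :
    (A 0 + (2 * (n : ℝ))⁻¹ • (A 3 + A 4 - A 5)) *
      (A 0 + (2 * (n : ℝ))⁻¹ • (A 3 + A 4 - A 5)) =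
    ((m : ℝ) + 1) • (A 0 + (2 * (n : ℝ))⁻¹ • (A 3 + A 4 - A 5)) := by
  have hE : OrthogonalIdempotents E := ⟨hidem, fun i j hij => horth i j hij⟩
  have hE₀₁₂ : IsIdempotentElem (E 0 + E 1 + E 2) := by
    simpa [add_assoc] using hE.isIdempotentElem_sum (s := {0, 1, 2})
  rw [mubh_G_eq_smul_sum_E n m hn.ne' hAE]
  exact hE₀₁₂.smul_mul_smul_self _

/-- If `A₀, …, A₅` is an association scheme whose first eigenmatrix equals that
of the 5-class MUBH scheme with parameters `n, m`, then
`G = A₀ + (A₃ + A₄ − A₅)/(2n)` satisfies `G² = (m+1)·G`. -/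
theorem scheme_G_idempotent (n m : ℕ) (hn : 0 < n)
    (A : Fin 6 → Matrix (Fin ((m+1) * (4*n^2))) (Fin ((m+1) * (4*n^2))) ℝ)
    (hA01 : ∀ i x y, A i x y = 0 ∨ A i x y = 1)
    (hA0 : A 0 = 1)
    (hsym : ∀ i, (A i)ᵀ = A i)
    (hsum : ∑ i, A i = Matrix.of (fun _ _ : Fin ((m+1) * (4*n^2)) => (1 : ℝ)))
    (E : Fin 6 → Matrix (Fin ((m+1) * (4*n^2))) (Fin ((m+1) * (4*n^2))) ℝ)
    (hidem : ∀ i, E i * E i = E i)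
    (horth : ∀ i j, i ≠ j → E i * E j = 0)
    (hEsum : ∑ i, E i = 1)
    (hAE : ∀ j, A j = ∑ i, eigP n m i j • E i) :
    (A 0 + (2 * (n : ℝ))⁻¹ • (A 3 + A 4 - A 5)) *
      (A 0 + (2 * (n : ℝ))⁻¹ • (A 3 + A 4 - A 5)) =
    ((m : ℝ) + 1) • (A 0 + (2 * (n : ℝ))⁻¹ • (A 3 + A 4 - A 5)) :=
  scheme_G_idempotent_general n m hn A E hidem horth hAE
end
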